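/- arXiv:2109.02095 — 10 statements merged into one kernel-verified Lean document; each statement's English description precedes it below -/
import Mathlib

section
/- Let p be an odd prime and let g be a primitive root modulo 2p (g odd). Then the residue class ring ℤ/2pℤ decomposes as the disjoint union D_0^{(2p)} ∪ D_1^{(2p)} ∪ 2D_0^{(p)} ∪ 2D_1^{(p)} ∪ {p} ∪ {0}, where D_0^{(2p)} = ⟨g²⟩ mod 2p, D_1^{(2p)} = g·⟨g²⟩ mod 2p, and D_0^{(p)}, D_1^{(p)} are the squares and nonsquares in (ℤ/pℤ)*. -/
theorem stmt3 (p : ℕ) [Fact p.Prime] (hp : p ≠ 2) (g : ℕ) (hgodd : Odd g)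
    (hg2p : orderOf (g : ZMod (2*p)) = Nat.totient (2*p))
    (hgp : orderOf (g : ZMod p) = Nat.totient p)
    (D02p D12p T0 T1 : Set (ZMod (2*p)))
    (hD0 : D02p = {x : ZMod (2*p) | ∃ k : ℕ, x = (g : ZMod (2*p)) ^ (2*k)})
    (hD1 : D12p = {x : ZMod (2*p) | ∃ k : ℕ, x = (g : ZMod (2*p)) ^ (2*k+1)})
    (hT0 : T0 = {x : ZMod (2*p) | ∃ j : ℕ, j < p ∧ ((j : ZMod p) ≠ 0 ∧ IsSquare ((j : ZMod p))) ∧ x = 2*j})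
    (hT1 : T1 = {x : ZMod (2*p) | ∃ j : ℕ, j < p ∧ ((j : ZMod p) ≠ 0 ∧ ¬ IsSquare ((j : ZMod p))) ∧ x = 2*j}) :
    (D02p ∪ D12p ∪ T0 ∪ T1 ∪ {(p : ZMod (2*p))} ∪ {0} = Set.univ) ∧
    (∀ i j : Fin 6, i ≠ j →
      Disjoint (![D02p, D12p, T0, T1, {(p : ZMod (2*p))}, {0}] i)
               (![D02p, D12p, T0, T1, {(p : ZMod (2*p))}, {0}] j)) := by
  have hpp : p.Prime := Fact.out
  have hp3 : 3 ≤ p := by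
    have := hpp.two_le; omega
  have podd : Odd p := hpp.odd_of_ne_two hp
  haveI : NeZero p := ⟨by omega⟩
  haveI : NeZero (2*p) := ⟨by omega⟩
  haveI : Fact (1 < 2*p) := ⟨by omega⟩
  -- g is a unit mod 2p
  have hgunit : IsUnit (g : ZMod (2*p)) := by
    refine IsUnit.of_pow_eq_one (n := Nat.totient (2*p)) ?_ ?_
    · rw [← hg2p]; exact pow_orderOf_eq_one _
    · exact (Nat.totient_pos.mpr (by omega)).ne'
  have hgpunit : IsUnit (g : ZMod p) := by
    refine IsUnit.of_pow_eq_one (n := Nat.totient p) ?_ ?_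
    · rw [← hgp]; exact pow_orderOf_eq_one _
    · exact (Nat.totient_pos.mpr (by omega)).ne'
  have hgpne : (g : ZMod p) ≠ 0 := hgpunit.ne_zero
  -- p is nonzero mod 2p
  have hpne : (p : ZMod (2*p)) ≠ 0 := by
    intro h
    rw [ZMod.natCast_eq_zero_iff] at h
    exact absurd (Nat.le_of_dvd (by omega) h) (by omega)
  have h2ne : (2 : ZMod (2*p)) ≠ 0 := by
    have : ((2:ℕ) : ZMod (2*p)) ≠ 0 := by
      intro h
      rw [ZMod.natCast_eq_zero_iff] at h
      exact absurd (Nat.le_of_dvd (by omega) h) (by omega)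
    exact_mod_cast this
  -- nonunit facts
  have hTnonunit : ∀ j : ℕ, (j : ZMod p) ≠ 0 → ¬ IsUnit (2 * (j : ZMod (2*p))) := by
    intro j hj hu
    have hz : (p : ZMod (2*p)) * (2 * (j : ZMod (2*p))) = 0 := by
      calc (p : ZMod (2*p)) * (2 * j) = (j : ZMod (2*p)) * ((2*p : ℕ) : ZMod (2*p)) := by
            push_cast; ring
        _ = 0 := by rw [ZMod.natCast_self, mul_zero]
    exact hpne ((hu.mul_left_eq_zero).mp hz)
  have hpnonunit : ¬ IsUnit ((p : ZMod (2*p))) := by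
    intro hu
    have hz : (2 : ZMod (2*p)) * (p : ZMod (2*p)) = 0 := by
      have : ((2:ℕ) : ZMod (2*p)) * ((p:ℕ) : ZMod (2*p)) = ((2*p : ℕ) : ZMod (2*p)) := by
        push_cast; ring
      rw [ZMod.natCast_self] at this
      exact_mod_cast this
    exact h2ne ((hu.mul_left_eq_zero).mp hz)
  have hDunit : ∀ x, x ∈ D02p ∪ D12p → IsUnit x := by
    intro x hx
    rcases hx with hx | hx
    · rw [hD0] at hx; obtain ⟨k, rfl⟩ := hx; exact hgunit.pow _
    · rw [hD1] at hx; obtain ⟨k, rfl⟩ := hx; exact hgunit.pow _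
  -- g mod p is not a square
  have hgnotsq : ¬ IsSquare ((g : ZMod p)) := by
    rintro ⟨h, hh⟩
    have hh0 : h ≠ 0 := by
      rintro rfl; exact hgpne (by rw [hh, mul_zero])
    obtain ⟨m, hm⟩ := podd
    have hpow : (g : ZMod p) ^ ((p-1)/2) = 1 := by
      have : (g : ZMod p) ^ ((p-1)/2) = h ^ (p-1) := by
        rw [hh, ← sq]
        rw [← pow_mul]
        congr 1
        omega
      rw [this]
      exact ZMod.pow_card_sub_one_eq_one hh0
    have hdvd := orderOf_dvd_of_pow_eq_one hpow
    rw [hgp, Nat.totient_prime hpp] at hdvd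
    have := Nat.le_of_dvd (by omega) hdvd
    omega
  have hsq : ∀ k : ℕ, IsSquare ((g : ZMod p) ^ (2*k)) := by
    intro k; exact ⟨(g : ZMod p)^k, by rw [← pow_add]; congr 1; ring⟩
  have hnsq : ∀ k : ℕ, ¬ IsSquare ((g : ZMod p) ^ (2*k+1)) := by
    intro k ⟨s, hs⟩
    apply hgnotsq
    have hk : ((g : ZMod p) ^ k) ≠ 0 := pow_ne_zero _ hgpne
    refine ⟨s * ((g : ZMod p)^k)⁻¹, ?_⟩
    field_simp
    rw [sq s, ← hs]
    ring
  -- cast hom to ZMod p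
  have hdvdp : p ∣ 2*p := dvd_mul_left p 2
  let φ : ZMod (2*p) →+* ZMod p := ZMod.castHom hdvdp (ZMod p)
  have hφg : ∀ n : ℕ, φ ((g : ZMod (2*p)) ^ n) = (g : ZMod p) ^ n := fun n => by
    rw [map_pow, map_natCast]
  -- disjointness of D0 and D1
  have d01 : Disjoint D02p D12p := by
    rw [Set.disjoint_left, hD0, hD1]
    rintro x ⟨k, rfl⟩ ⟨k', he⟩
    have := congrArg φ he
    rw [hφg, hφg] at this
    exact hnsq k' (this ▸ hsq k)
  -- unit / nonunit disjointness
  have hTnon' : ∀ x, x ∈ T0 ∪ T1 ∪ {(p : ZMod (2*p))} ∪ {(0 : ZMod (2*p))} → ¬ IsUnit x := by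
    intro x hx
    rcases hx with ((hx | hx) | hx) | hx
    · rw [hT0] at hx; obtain ⟨j, _, ⟨hj, _⟩, rfl⟩ := hx; exact hTnonunit j hj
    · rw [hT1] at hx; obtain ⟨j, _, ⟨hj, _⟩, rfl⟩ := hx; exact hTnonunit j hj
    · rw [Set.mem_singleton_iff] at hx; subst hx; exact hpnonunit
    · rw [Set.mem_singleton_iff] at hx; subst hx; exact not_isUnit_zero
  have dUnit : ∀ A B : Set (ZMod (2*p)), A ⊆ D02p ∪ D12p →
      B ⊆ T0 ∪ T1 ∪ {(p : ZMod (2*p))} ∪ {(0 : ZMod (2*p))} → Disjoint A B := by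
    intro A B hA hB
    rw [Set.disjoint_left]
    intro x hxA hxB
    exact hTnon' x (hB hxB) (hDunit x (hA hxA))
  -- extracting nat equalities from T-style membership
  have hval : ∀ a b : ℕ, a < 2*p → b < 2*p → ((a : ZMod (2*p)) = (b : ZMod (2*p))) → a = b := by
    intro a b ha hb he
    have := congrArg ZMod.val he
    rwa [ZMod.val_cast_of_lt ha, ZMod.val_cast_of_lt hb] at this
  have hTcast : ∀ j : ℕ, (2 : ZMod (2*p)) * (j : ZMod (2*p)) = ((2*j : ℕ) : ZMod (2*p)) := by
    intro j; push_cast; ring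
  -- T0 ∩ T1
  have t01 : Disjoint T0 T1 := by
    rw [Set.disjoint_left, hT0, hT1]
    rintro x ⟨j, hjp, ⟨hj0, hjs⟩, rfl⟩ ⟨j', hjp', ⟨hj0', hjs'⟩, he⟩
    have : (2*j : ℕ) = (2*j' : ℕ) := by
      apply hval _ _ (by omega) (by omega)
      rw [← hTcast, ← hTcast]; exact he
    have : j = j' := by omega
    subst this
    exact hjs' hjs
  have hjne : ∀ j : ℕ, (j : ZMod p) ≠ 0 → j < p → 0 < j := by
    intro j hj hjp
    rcases Nat.eq_zero_or_pos j with rfl | h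
    · simp at hj
    · exact h
  -- T0/T1 vs {p}
  have t0p : Disjoint T0 {(p : ZMod (2*p))} := by
    rw [Set.disjoint_left, hT0]
    rintro x ⟨j, hjp, ⟨hj0, _⟩, rfl⟩ hx
    rw [Set.mem_singleton_iff, hTcast] at hx
    have := hval _ _ (by omega) (by omega) hx
    obtain ⟨m, hm⟩ := podd
    omega
  have t1p : Disjoint T1 {(p : ZMod (2*p))} := by
    rw [Set.disjoint_left, hT1]
    rintro x ⟨j, hjp, ⟨hj0, _⟩, rfl⟩ hx
    rw [Set.mem_singleton_iff, hTcast] at hx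
    have := hval _ _ (by omega) (by omega) hx
    obtain ⟨m, hm⟩ := podd
    omega
  have t00 : Disjoint T0 {(0 : ZMod (2*p))} := by
    rw [Set.disjoint_left, hT0]
    rintro x ⟨j, hjp, ⟨hj0, _⟩, rfl⟩ hx
    rw [Set.mem_singleton_iff, hTcast] at hx
    have h0 : ((0:ℕ) : ZMod (2*p)) = (0 : ZMod (2*p)) := by push_cast; ring
    have := hval (2*j) 0 (by omega) (by omega) (by rw [hx, h0])
    have := hjne j hj0 hjp
    omega
  have t10 : Disjoint T1 {(0 : ZMod (2*p))} := by
    rw [Set.disjoint_left, hT1]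
    rintro x ⟨j, hjp, ⟨hj0, _⟩, rfl⟩ hx
    rw [Set.mem_singleton_iff, hTcast] at hx
    have h0 : ((0:ℕ) : ZMod (2*p)) = (0 : ZMod (2*p)) := by push_cast; ring
    have := hval (2*j) 0 (by omega) (by omega) (by rw [hx, h0])
    have := hjne j hj0 hjp
    omega
  have p0 : Disjoint ({(p : ZMod (2*p))} : Set (ZMod (2*p))) ({(0 : ZMod (2*p))} : Set (ZMod (2*p))) := by
    rw [Set.disjoint_left]
    rintro x hx hx0
    rw [Set.mem_singleton_iff] at hx hx0
    exact hpne (hx ▸ hx0)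
  -- abbreviations for unit-vs-nonunit disjointness
  have sub0 : D02p ⊆ D02p ∪ D12p := Set.subset_union_left
  have sub1 : D12p ⊆ D02p ∪ D12p := Set.subset_union_right
  have nsub0 : T0 ⊆ T0 ∪ T1 ∪ {(p : ZMod (2*p))} ∪ {(0 : ZMod (2*p))} := by
    intro x hx; exact Or.inl (Or.inl (Or.inl hx))
  have nsub1 : T1 ⊆ T0 ∪ T1 ∪ {(p : ZMod (2*p))} ∪ {(0 : ZMod (2*p))} := by
    intro x hx; exact Or.inl (Or.inl (Or.inr hx))
  have nsubp : ({(p : ZMod (2*p))} : Set (ZMod (2*p))) ⊆ T0 ∪ T1 ∪ {(p : ZMod (2*p))} ∪ {(0 : ZMod (2*p))} := by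
    intro x hx; exact Or.inl (Or.inr hx)
  have nsubz : ({(0 : ZMod (2*p))} : Set (ZMod (2*p))) ⊆ T0 ∪ T1 ∪ {(p : ZMod (2*p))} ∪ {(0 : ZMod (2*p))} := by
    intro x hx; exact Or.inr hx
  constructor
  · -- coverage
    ext x
    simp only [Set.mem_univ, iff_true]
    by_cases hu : IsUnit x
    · -- x is a power of g
      obtain ⟨k, hk⟩ : ∃ k : ℕ, x = (g : ZMod (2*p)) ^ k := by
        haveI : Fintype (ZMod (2*p))ˣ := inferInstance
        set u : (ZMod (2*p))ˣ := hgunit.unit with hudef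
        have hucoe : (u : ZMod (2*p)) = (g : ZMod (2*p)) := hgunit.unit_spec
        have hou : orderOf u = Nat.card (ZMod (2*p))ˣ := by
          rw [← orderOf_units, hucoe, hg2p, Nat.card_eq_fintype_card,
            ZMod.card_units_eq_totient]
        have htop : Subgroup.zpowers u = ⊤ := by
          apply Subgroup.eq_top_of_card_eq
          rw [Nat.card_zpowers, hou]
        have hmem : hu.unit ∈ Subgroup.zpowers u := by rw [htop]; trivial
        rw [← mem_powers_iff_mem_zpowers] at hmem
        obtain ⟨k, hk⟩ := hmem
        refine ⟨k, ?_⟩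
        have := congrArg (Units.val) hk
        rw [Units.val_pow_eq_pow_val, hucoe, hu.unit_spec] at this
        exact this.symm
      rcases Nat.even_or_odd k with ⟨m, hm⟩ | ⟨m, hm⟩
      · refine Or.inl (Or.inl (Or.inl (Or.inl (Or.inl ?_))))
        rw [hD0]; exact ⟨m, by rw [hk, hm]; congr 1; ring⟩
      · refine Or.inl (Or.inl (Or.inl (Or.inl (Or.inr ?_))))
        rw [hD1]; exact ⟨m, by rw [hk, hm]⟩
    · -- x is not a unit
      have hxval : ((x.val : ℕ) : ZMod (2*p)) = x := ZMod.natCast_rightInverse x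
      set n := x.val with hn
      have hnlt : n < 2*p := ZMod.val_lt x
      have hnc : ¬ Nat.Coprime n (2*p) := by
        intro hc
        exact hu (hxval ▸ (ZMod.isUnit_iff_coprime n (2*p)).mpr hc)
      by_cases hpn : p ∣ n
      · obtain ⟨c, hc⟩ := hpn
        have hc2 : c = 0 ∨ c = 1 := by
          rcases Nat.lt_or_ge c 2 with h | h
          · omega
          · exfalso; nlinarith [hc ▸ hnlt]
        rcases hc2 with rfl | rfl
        · refine Or.inr ?_
          rw [Set.mem_singleton_iff, ← hxval]
          norm_num [hc]
        · refine Or.inl (Or.inr ?_)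
          rw [Set.mem_singleton_iff, ← hxval, hc]
          norm_num
      · have h2n : 2 ∣ n := by
          by_contra h2
          apply hnc
          have c2 : Nat.Coprime n 2 := (Nat.coprime_comm.mp ((Nat.prime_two.coprime_iff_not_dvd).mpr h2))
          have cp : Nat.Coprime n p := (Nat.coprime_comm.mp ((hpp.coprime_iff_not_dvd).mpr hpn))
          exact Nat.Coprime.mul_right c2 cp
        obtain ⟨j, hj⟩ := h2n
        have hjlt : j < p := by omega
        have hjp : ¬ p ∣ j := by
          rintro ⟨c, hc⟩
          exact hpn ⟨2*c, by rw [hj, hc]; ring⟩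
        have hj0 : (j : ZMod p) ≠ 0 := by
          intro h
          rw [ZMod.natCast_eq_zero_iff] at h; exact hjp h
        have hxe : x = 2 * (j : ZMod (2*p)) := by
          rw [hTcast, ← hxval, hj]
        by_cases hjs : IsSquare ((j : ZMod p))
        · refine Or.inl (Or.inl (Or.inl (Or.inr ?_)))
          rw [hT0]; exact ⟨j, hjlt, ⟨hj0, hjs⟩, hxe⟩
        · refine Or.inl (Or.inl (Or.inr ?_))
          rw [hT1]; exact ⟨j, hjlt, ⟨hj0, hjs⟩, hxe⟩
  · -- pairwise disjointness
    have d02 : Disjoint D02p T0 := dUnit _ _ sub0 nsub0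
    have d03 : Disjoint D02p T1 := dUnit _ _ sub0 nsub1
    have d04 : Disjoint D02p {(p : ZMod (2*p))} := dUnit _ _ sub0 nsubp
    have d05 : Disjoint D02p {(0 : ZMod (2*p))} := dUnit _ _ sub0 nsubz
    have d12 : Disjoint D12p T0 := dUnit _ _ sub1 nsub0
    have d13 : Disjoint D12p T1 := dUnit _ _ sub1 nsub1
    have d14 : Disjoint D12p {(p : ZMod (2*p))} := dUnit _ _ sub1 nsubp
    have d15 : Disjoint D12p {(0 : ZMod (2*p))} := dUnit _ _ sub1 nsubz
    intro i j hij
    fin_cases i <;> fin_cases j <;>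
      first
        | exact absurd rfl hij
        | exact d01 | exact d01.symm
        | exact d02 | exact d02.symm
        | exact d03 | exact d03.symm
        | exact d04 | exact d04.symm
        | exact d05 | exact d05.symm
        | exact d12 | exact d12.symm
        | exact d13 | exact d13.symm
        | exact d14 | exact d14.symm
        | exact d15 | exact d15.symm
        | exact t01 | exact t01.symm
        | exact t0p | exact t0p.symm
        | exact t00 | exact t00.symm
        | exact t1p | exact t1p.symm
        | exact t10 | exact t10.symm
        | exact p0 | exact p0.symm
end

section
/- Let p be a prime with p ≡ 1 (mod 4), r a prime with r ≥ 5 and r ≠ p, α a primitive p-th root of unity over 𝔽_r, and η_0 = Σ_{i ∈ QR(p)} α^i. Then η_0(1 + η_0) = (p-1)/4 in 𝔽_r (i.e., (p-1)/4 reduced mod r). -/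
open scoped Classical

theorem stmt5 (p r : ℕ) (hp : p.Prime) (hp4 : p % 4 = 1) (hr : r.Prime) (hr5 : 5 ≤ r)
    (hrp : r ≠ p) (F : Type) [Field F] [CharP F r] (α : F) (hα : IsPrimitiveRoot α p)
    (η₀ : F)
    (hη₀ : η₀ = ∑ i ∈ (Finset.range p).filter
        (fun i => ((i : ℕ) : ZMod p) ≠ 0 ∧ IsSquare (((i : ℕ)) : ZMod p)), α ^ i) :
    η₀ * (1 + η₀) = (((p - 1) / 4 : ℕ) : F) := by
  haveI : Fact p.Prime := ⟨hp⟩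
  haveI : Fact r.Prime := ⟨hr⟩
  haveI : NeZero p := ⟨hp.pos.ne'⟩
  have hp5 : 5 ≤ p := by
    have := hp.two_le; omega
  -- basic nonvanishing facts in F
  have hcast : ∀ n : ℕ, ((n : F) = 0 ↔ r ∣ n) := fun n => CharP.cast_eq_zero_iff F r n
  have h2 : (2 : F) ≠ 0 := by
    have : ((2 : ℕ) : F) ≠ 0 := by
      rw [Ne, hcast]; intro h; have := Nat.le_of_dvd (by norm_num) h; omega
    simpa using this
  have h4 : (4 : F) ≠ 0 := by
    have : ((4 : ℕ) : F) ≠ 0 := by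
      rw [Ne, hcast]; intro h; have := Nat.le_of_dvd (by norm_num) h; omega
    simpa using this
  have hneg1 : (-1 : F) ≠ 1 := by
    intro h
    have : (2 : F) = 0 := by linear_combination -h
    exact h2 this
  -- the additive character
  set ψ : AddChar (ZMod p) F := AddChar.zmodChar p hα.pow_eq_one with hψdef
  have hψ : ψ.IsPrimitive := AddChar.zmodChar_primitive_of_primitive_root p hα
  haveI : Fact (1 < p) := ⟨by omega⟩
  have hψne : ψ ≠ 0 := by
    rw [AddChar.ne_zero_iff]
    refine ⟨1, ?_⟩
    have h1 : ψ (1 : ZMod p) = α ^ (1 : ZMod p).val := AddChar.zmodChar_apply _ _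
    rw [h1, ZMod.val_one]
    simpa using hα.ne_one (by omega)
  -- the quadratic character
  have hchar2 : ringChar (ZMod p) ≠ 2 := by
    rw [ZMod.ringChar_zmod_n]; omega
  set χ : MulChar (ZMod p) F := (quadraticChar (ZMod p)).ringHomComp (Int.castRingHom F)
    with hχdef
  have hχ₂ : χ.IsQuadratic := (quadraticChar_isQuadratic (ZMod p)).comp _
  have hχ₁ : χ ≠ 1 := by
    obtain ⟨a, ha⟩ := quadraticChar_exists_neg_one hchar2
    intro h
    have ha0 : a ≠ 0 := by
      intro h0; rw [h0, quadraticChar_zero] at ha; exact absurd ha (by norm_num)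
    have h1 : χ a = 1 := by
      rw [h, MulChar.one_apply (Ne.isUnit ha0)]
    have h2' : χ a = -1 := by
      simp [hχdef, MulChar.ringHomComp_apply, ha]
    rw [h1] at h2'
    exact hneg1 h2'.symm
  -- rewrite η₀ as a sum over ZMod p
  have hη : η₀ = ∑ a ∈ Finset.univ.filter (fun a : ZMod p => a ≠ 0 ∧ IsSquare a), ψ a := by
    rw [hη₀]
    refine Finset.sum_nbij' (fun i => (i : ZMod p)) (fun a => a.val) ?_ ?_ ?_ ?_ ?_
    · intro i hi
      simp only [Finset.mem_filter, Finset.mem_range] at hi ⊢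
      exact ⟨Finset.mem_univ _, hi.2⟩
    · intro a ha
      simp only [Finset.mem_filter, Finset.mem_univ, true_and] at ha
      simp only [Finset.mem_filter, Finset.mem_range]
      refine ⟨a.val_lt, ?_⟩
      rw [ZMod.natCast_val, ZMod.cast_id]
      exact ha
    · intro i hi
      simp only [Finset.mem_filter, Finset.mem_range] at hi
      exact ZMod.val_natCast_of_lt hi.1
    · intro a ha
      simp [ZMod.natCast_val, ZMod.cast_id]
    · intro i hi
      simp only [Finset.mem_filter, Finset.mem_range] at hi
      rw [hψdef, AddChar.zmodChar_apply, ZMod.val_natCast_of_lt hi.1]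
  -- sum of ψ over all of ZMod p is 0
  have hsumψ : ∑ a : ZMod p, ψ a = 0 := by
    classical
    rw [AddChar.sum_eq_ite, if_neg hψne]
  -- key identity: gaussSum χ ψ = 1 + 2 * η₀
  have hkey : gaussSum χ ψ = 1 + 2 * η₀ := by
    have hpt : ∀ a : ZMod p, χ a * ψ a =
        (if a ≠ 0 ∧ IsSquare a then 2 * ψ a else 0) - ψ a + (if a = 0 then 1 else 0) := by
      intro a
      by_cases h0 : a = 0
      · subst h0
        simp [MulChar.map_zero]
      · by_cases hsq : IsSquare a
        · have : quadraticChar (ZMod p) a = 1 := (quadraticChar_one_iff_isSquare h0).mpr hsq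
          have hχa : χ a = 1 := by simp [hχdef, MulChar.ringHomComp_apply, this]
          rw [hχa, if_pos ⟨h0, hsq⟩, if_neg h0]
          ring
        · have : quadraticChar (ZMod p) a = -1 := quadraticChar_neg_one_iff_not_isSquare.mpr hsq
          have hχa : χ a = -1 := by simp [hχdef, MulChar.ringHomComp_apply, this]
          rw [hχa, if_neg (by tauto), if_neg h0]
          ring
    rw [gaussSum]
    rw [Finset.sum_congr rfl (fun a _ => hpt a)]
    rw [Finset.sum_add_distrib, Finset.sum_sub_distrib, hsumψ]
    rw [Finset.sum_ite_eq' Finset.univ (0 : ZMod p) (fun _ => (1 : F))]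
    rw [if_pos (Finset.mem_univ _)]
    rw [← Finset.sum_filter, ← Finset.mul_sum, ← hη]
    ring
  -- Gauss sum square
  have hτsq : gaussSum χ ψ ^ 2 = (p : F) := by
    rw [gaussSum_sq hχ₁ hχ₂ hψ]
    have hχneg : χ (-1) = 1 := by
      have h1 : quadraticChar (ZMod p) (-1) = ZMod.χ₄ (Fintype.card (ZMod p)) :=
        quadraticChar_neg_one hchar2
      rw [ZMod.card] at h1
      rw [ZMod.χ₄_nat_one_mod_four hp4] at h1
      simp [hχdef, MulChar.ringHomComp_apply, h1]
    rw [hχneg, ZMod.card, one_mul]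
  -- conclude
  have hmain : (1 + 2 * η₀) ^ 2 = (p : F) := by rw [← hkey]; exact hτsq
  have h4div : 4 ∣ p - 1 := by omega
  have hcast4 : (((p - 1) / 4 : ℕ) : F) * 4 = (p : F) - 1 := by
    have h' : (((p - 1) / 4 * 4 : ℕ) : F) = ((p - 1 : ℕ) : F) := by
      rw [Nat.div_mul_cancel h4div]
    push_cast [Nat.cast_sub hp.one_le] at h'
    exact_mod_cast h'
  apply mul_left_cancel₀ h4
  rw [show (4 : F) * (η₀ * (1 + η₀)) = (1 + 2 * η₀)^2 - 1 by ring, hmain]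
  rw [show (4 : F) * (((p - 1) / 4 : ℕ) : F) = (((p - 1) / 4 : ℕ) : F) * 4 by ring, hcast4]
end

section
/- Let p be a prime with p ≡ 3 (mod 4), r a prime with r ≥ 5 and r ≠ p, α a primitive p-th root of unity over 𝔽_r, and η_1 = Σ_{i ∈ QNR(p)} α^i. Then η_1(1 + η_1) = -(p+1)/4 in 𝔽_r. -/
open scoped Classical

theorem stmt6 (p r : ℕ) (hp : p.Prime) (hp4 : p % 4 = 3) (hr : r.Prime) (hr5 : 5 ≤ r)
    (hrp : r ≠ p) (F : Type) [Field F] [CharP F r] (α : F) (hα : IsPrimitiveRoot α p)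
    (η₁ : F)
    (hη₁ : η₁ = ∑ i ∈ (Finset.range p).filter
        (fun i => ((i : ℕ) : ZMod p) ≠ 0 ∧ ¬ IsSquare (((i : ℕ)) : ZMod p)), α ^ i) :
    η₁ * (1 + η₁) = -(((p + 1) / 4 : ℕ) : F) := by
  haveI : Fact p.Prime := ⟨hp⟩
  haveI : NeZero p := ⟨hp.ne_zero⟩
  have hp2 : p ≠ 2 := by omega
  have hrchZ : ringChar (ZMod p) ≠ 2 := by
    rw [ZMod.ringChar_zmod_n]; exact hp2
  have hrchF : ringChar F = r := ringChar.eq F r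
  have h2 : (2 : F) ≠ 0 := by
    have : ringChar F ≠ 2 := by rw [hrchF]; omega
    exact Ring.two_ne_zero this
  have h4 : (4 : F) ≠ 0 := by
    have : (4 : F) = 2 * 2 := by norm_num
    rw [this]; exact mul_ne_zero h2 h2
  -- the additive character
  set ψ : AddChar (ZMod p) F := AddChar.zmodChar p hα.pow_eq_one with hψ
  have hψprim : ψ.IsPrimitive := by
    have := AddChar.zmodChar_primitive_of_primitive_root p hα
    exact this
  have hψne : ψ ≠ 1 := by
    intro h
    have := hψprim (a := 1) one_ne_zero
    rw [AddChar.mulShift_one, h] at this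
    exact this rfl
  have hψval : ∀ x : ZMod p, ψ x = α ^ x.val := fun x => AddChar.zmodChar_apply _ x
  -- the multiplicative character
  set χ : MulChar (ZMod p) F := (quadraticChar (ZMod p)).ringHomComp (Int.castRingHom F) with hχ
  have hχquad : χ.IsQuadratic := (quadraticChar_isQuadratic (ZMod p)).comp _
  obtain ⟨b, hb⟩ := FiniteField.exists_nonsquare hrchZ
  have hb0 : b ≠ 0 := fun h => hb (h ▸ (⟨0, by simp⟩ : IsSquare (0 : ZMod p)))
  have hχb : χ b = -1 := by
    rw [hχ]
    simp only [MulChar.ringHomComp_apply]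
    rw [quadraticChar_neg_one_iff_not_isSquare.mpr hb]
    simp
  have hχne : χ ≠ 1 := by
    rw [MulChar.ne_one_iff]
    refine ⟨(isUnit_iff_ne_zero.mpr hb0).unit, ?_⟩
    rw [IsUnit.unit_spec, hχb]
    intro h
    exact h2 (by linear_combination -h)
  -- Gauss sum square
  set g : F := gaussSum χ ψ with hg
  have hgsq : g ^ 2 = - (p : F) := by
    rw [hg, gaussSum_sq hχne hχquad hψprim]
    have : χ (-1) = -1 := by
      rw [hχ]
      simp only [MulChar.ringHomComp_apply]
      rw [quadraticChar_neg_one hrchZ, ZMod.card, ZMod.χ₄_nat_three_mod_four hp4]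
      simp
    rw [this, ZMod.card]
    ring
  -- sums over squares / nonsquares
  classical
  set S₀ : F := ∑ x ∈ Finset.univ.filter (fun x : ZMod p => x ≠ 0 ∧ IsSquare x), ψ x with hS₀
  set S₁ : F := ∑ x ∈ Finset.univ.filter (fun x : ZMod p => x ≠ 0 ∧ ¬ IsSquare x), ψ x with hS₁
  -- η₁ = S₁
  have hη₁S : η₁ = S₁ := by
    rw [hη₁, hS₁]
    refine (Finset.sum_nbij' (fun x : ZMod p => x.val) (fun i : ℕ => (i : ZMod p)) ?_ ?_ ?_ ?_ ?_).symm
    · intro a ha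
      simp only [Finset.mem_filter, Finset.mem_range, Finset.mem_univ, true_and] at ha ⊢
      have : ((a.val : ℕ) : ZMod p) = a := by simp [ZMod.natCast_val, ZMod.cast_id]
      rw [this]
      exact ⟨a.val_lt, ha⟩
    · intro i hi
      simp only [Finset.mem_filter, Finset.mem_range, Finset.mem_univ, true_and] at hi ⊢
      exact hi.2
    · intro a ha
      simp [ZMod.natCast_val, ZMod.cast_id]
    · intro i hi
      simp only [Finset.mem_filter, Finset.mem_range] at hi
      exact ZMod.val_cast_of_lt hi.1
    · intro a ha
      rw [hψval]
  -- S₀ + S₁ = -1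
  have hsum : S₀ + S₁ = -1 := by
    have htot : ∑ x : ZMod p, ψ x = 0 := AddChar.sum_eq_zero_of_ne_one hψne
    have hsplit : ∑ x : ZMod p, ψ x
        = ψ 0 + ∑ x ∈ Finset.univ.filter (fun x : ZMod p => x ≠ 0), ψ x := by
      rw [← Finset.sum_filter_add_sum_filter_not Finset.univ (fun x : ZMod p => x = 0)]
      congr 1
      rw [Finset.filter_eq']
      simp
    have hne : ∑ x ∈ Finset.univ.filter (fun x : ZMod p => x ≠ 0), ψ x = S₀ + S₁ := by
      rw [hS₀, hS₁, ← Finset.sum_filter_add_sum_filter_not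
        (Finset.univ.filter (fun x : ZMod p => x ≠ 0)) (fun x : ZMod p => IsSquare x),
        Finset.filter_filter, Finset.filter_filter]
    rw [hsplit, hne, AddChar.map_zero_eq_one] at htot
    linear_combination htot
  -- g = S₀ - S₁
  have hgS : g = S₀ - S₁ := by
    rw [hg, gaussSum, hS₀, hS₁]
    rw [Finset.sum_filter, Finset.sum_filter, ← Finset.sum_sub_distrib]
    apply Finset.sum_congr rfl
    intro x _
    by_cases hx0 : x = 0
    · subst hx0
      simp [hχ, MulChar.ringHomComp_apply]
    by_cases hxs : IsSquare x
    · have : χ x = 1 := by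
        rw [hχ]; simp only [MulChar.ringHomComp_apply]
        rw [(quadraticChar_one_iff_isSquare hx0).mpr hxs]; simp
      rw [this]
      simp [hx0, hxs]
    · have : χ x = -1 := by
        rw [hχ]; simp only [MulChar.ringHomComp_apply]
        rw [quadraticChar_neg_one_iff_not_isSquare.mpr hxs]; simp
      rw [this]
      simp only [hx0, hxs, ne_eq, not_true_eq_false, and_false, not_false_eq_true, and_self,
        if_true, if_false, zero_sub]
      ring
  -- final algebra
  have h2S₁ : 2 * S₁ = -1 - g := by rw [hgS]; linear_combination hsum
  have hp1 : 4 * ((p + 1) / 4) = p + 1 := by omega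
  have hcast : (4 : F) * (((p + 1) / 4 : ℕ) : F) = (p : F) + 1 := by
    have : ((4 * ((p + 1) / 4) : ℕ) : F) = ((p + 1 : ℕ) : F) := by rw [hp1]
    push_cast at this
    linear_combination this
  have key : (4 : F) * (η₁ * (1 + η₁)) = (4 : F) * (-(((p + 1) / 4 : ℕ) : F)) := by
    have lhs : (4 : F) * (η₁ * (1 + η₁)) = (2 * η₁) * (2 + 2 * η₁) := by ring
    rw [lhs, hη₁S, h2S₁]
    have : (2 : F) + (-1 - g) = 1 - g := by ring
    rw [this]
    have expand : (-1 - g) * (1 - g) = g ^ 2 - 1 := by ring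
    rw [expand, hgsq]
    rw [mul_neg, hcast]
    ring
  exact mul_left_cancel₀ h4 key
end

section
/- Let p be an odd prime, r a prime with r ≥ 5, r ≠ p, and β a primitive 2p-th root of unity over 𝔽_r. Let S(x) = 1 + Σ_{i ∈ D_1^{(2p)}} x^i + Σ_{i ∈ 2D_1^{(p)}} x^i, where D_1^{(2p)} is the set of odd quadratic nonresidues modulo p in [0, 2p) coprime to 2p, and 2D_1^{(p)} the even residues 2j with j a nonresidue mod p. Then S(β^0) = p (as an element of 𝔽_r) and S(β^p) = 1. -/
open scoped Classical

open Finset in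
lemma card_nonsquares_two_mul (p : ℕ) [hfp : Fact p.Prime] (hp2 : p ≠ 2) :
    (Finset.univ.filter fun a : ZMod p => ¬ IsSquare a).card * 2 = p - 1 := by
  have hp := hfp.out
  have hchar : ringChar (ZMod p) ≠ 2 := by
    rw [ZMod.ringChar_zmod_n]; exact hp2
  have h0 : ∑ a : ZMod p, quadraticChar (ZMod p) a = 0 := quadraticChar_sum_zero hchar
  have hmem : (0 : ZMod p) ∈ (univ : Finset (ZMod p)) := mem_univ _
  rw [← Finset.add_sum_erase _ _ hmem, quadraticChar_zero, zero_add,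
    ← Finset.sum_filter_add_sum_filter_not (univ.erase 0) (fun a => IsSquare a)] at h0
  have hsq : ∑ a ∈ (univ.erase (0:ZMod p)).filter (fun a => IsSquare a),
      quadraticChar (ZMod p) a
      = (((univ.erase (0:ZMod p)).filter (fun a => IsSquare a)).card : ℤ) := by
    rw [Finset.sum_congr rfl (fun a ha => ?_), Finset.sum_const, nsmul_eq_mul, mul_one]
    simp only [mem_filter, mem_erase] at ha
    exact (quadraticChar_one_iff_isSquare ha.1.1).mpr ha.2
  have hns : ∑ a ∈ (univ.erase (0:ZMod p)).filter (fun a => ¬ IsSquare a),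
      quadraticChar (ZMod p) a
      = -(((univ.erase (0:ZMod p)).filter (fun a => ¬ IsSquare a)).card : ℤ) := by
    rw [Finset.sum_congr rfl (fun a ha => ?_), Finset.sum_const, nsmul_eq_mul, mul_neg_one]
    simp only [mem_filter, mem_erase] at ha
    exact quadraticChar_neg_one_iff_not_isSquare.mpr ha.2
  rw [hsq, hns] at h0
  have hset : (univ.erase (0:ZMod p)).filter (fun a => ¬ IsSquare a)
      = univ.filter (fun a : ZMod p => ¬ IsSquare a) := by
    ext a
    simp only [mem_filter, mem_erase, mem_univ, true_and, and_true]
    constructor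
    · rintro ⟨_, h⟩; exact h
    · intro h
      refine ⟨fun h0' => h ?_, h⟩
      rw [h0']; exact IsSquare.zero
  rw [hset] at h0
  have hsplit : ((univ.erase (0:ZMod p)).filter (fun a => IsSquare a)).card
      + ((univ.erase (0:ZMod p)).filter (fun a => ¬ IsSquare a)).card
      = (univ.erase (0:ZMod p)).card :=
    Finset.card_filter_add_card_filter_not _
  have hcard_erase : (univ.erase (0:ZMod p)).card = p - 1 := by
    rw [Finset.card_erase_of_mem hmem, Finset.card_univ, ZMod.card]
  rw [hset, hcard_erase] at hsplit
  omega

open Finset in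
lemma card_B (p : ℕ) (hp : p.Prime) (hp2 : p ≠ 2) :
    ((Finset.range p).filter
      (fun j => ((j : ℕ) : ZMod p) ≠ 0 ∧ ¬ IsSquare (((j : ℕ)) : ZMod p))).card * 2 = p - 1 := by
  haveI : Fact p.Prime := ⟨hp⟩
  rw [← card_nonsquares_two_mul p hp2]
  congr 1
  apply Finset.card_nbij' (fun j => ((j : ℕ) : ZMod p)) (fun a => a.val)
  · intro j hj
    simp only [Finset.mem_coe, mem_filter, mem_range] at hj ⊢
    exact ⟨mem_univ _, hj.2.2⟩
  · intro a ha
    simp only [Finset.mem_coe, mem_filter, mem_univ, true_and] at ha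
    simp only [Finset.mem_coe, mem_filter, mem_range, ZMod.natCast_val, ZMod.cast_id]
    exact ⟨ZMod.val_lt a, fun h => ha (h ▸ IsSquare.zero), ha⟩
  · intro j hj
    simp only [Finset.mem_coe, mem_filter, mem_range] at hj
    exact ZMod.val_natCast_of_lt hj.1
  · intro a _
    simp [ZMod.natCast_val, ZMod.cast_id]

open Finset in
lemma card_A (p : ℕ) (hp : p.Prime) (hp2 : p ≠ 2) :
    ((Finset.range (2*p)).filter
      (fun t => Nat.Coprime t (2*p) ∧ ¬ IsSquare (((t : ℕ)) : ZMod p))).card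
    = ((Finset.range p).filter
      (fun j => ((j : ℕ) : ZMod p) ≠ 0 ∧ ¬ IsSquare (((j : ℕ)) : ZMod p))).card := by
  haveI : Fact p.Prime := ⟨hp⟩
  have hodd : Odd p := hp.odd_of_ne_two hp2
  have hppos : 0 < p := hp.pos
  apply Finset.card_nbij' (fun t => t % p) (fun j => if Odd j then j else j + p)
  · -- forward map lands in B
    intro t ht
    simp only [Finset.mem_coe, mem_filter, mem_range] at ht ⊢
    obtain ⟨htlt, hcop, hns⟩ := ht
    have hcp : Nat.Coprime t p := Nat.Coprime.coprime_dvd_right (dvd_mul_left p 2) hcop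
    have hnd : ¬ p ∣ t := hp.coprime_iff_not_dvd.mp hcp.symm
    have hcast : ((t % p : ℕ) : ZMod p) = ((t : ℕ) : ZMod p) := by
      conv_rhs => rw [← Nat.mod_add_div t p]
      push_cast
      simp
    refine ⟨Nat.mod_lt _ hppos, ?_, ?_⟩
    · rw [hcast, Ne, ZMod.natCast_eq_zero_iff]
      exact hnd
    · rw [hcast]; exact hns
  · -- backward map lands in A
    intro j hj
    simp only [Finset.mem_coe, mem_filter, mem_range] at hj ⊢
    obtain ⟨hjlt, hj0, hns⟩ := hj
    have hnd : ¬ p ∣ j := by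
      rw [Ne, ZMod.natCast_eq_zero_iff] at hj0; exact hj0
    by_cases hoj : Odd j
    · simp only [if_pos hoj]
      refine ⟨by omega, ?_, hns⟩
      exact Nat.Coprime.mul_right (Nat.coprime_two_right.mpr hoj)
        (hp.coprime_iff_not_dvd.mpr hnd).symm
    · simp only [if_neg hoj]
      have hoj' : Odd (j + p) := (Nat.not_odd_iff_even.mp hoj).add_odd hodd
      have hndp : ¬ p ∣ (j + p) := fun h => hnd (by simpa using Nat.dvd_sub h (dvd_refl p))
      have hcast : ((j + p : ℕ) : ZMod p) = ((j : ℕ) : ZMod p) := by push_cast; simp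
      refine ⟨by omega, ?_, by rw [hcast]; exact hns⟩
      exact Nat.Coprime.mul_right (Nat.coprime_two_right.mpr hoj')
        (hp.coprime_iff_not_dvd.mpr hndp).symm
  · -- left inverse
    intro t ht
    simp only [Finset.mem_coe, mem_filter, mem_range] at ht
    dsimp only
    obtain ⟨htlt, hcop, _⟩ := ht
    have hto : Odd t :=
      (Nat.Coprime.coprime_dvd_right (dvd_mul_right 2 p) hcop).odd_of_right
    by_cases htp : t < p
    · rw [Nat.mod_eq_of_lt htp, if_pos hto]
    · have hmod : t % p = t - p := by
        rw [(by omega : t = (t - p) + 1 * p), Nat.add_mul_mod_self_right,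
          Nat.mod_eq_of_lt (by omega)]
        omega
      have hne : ¬ Odd (t % p) := by
        rw [hmod]
        rw [Nat.odd_iff] at hto hodd ⊢
        omega
      rw [if_neg hne, hmod]
      omega
  · -- right inverse
    intro j hj
    simp only [Finset.mem_coe, mem_filter, mem_range] at hj
    dsimp only
    by_cases hoj : Odd j
    · rw [if_pos hoj, Nat.mod_eq_of_lt hj.1]
    · rw [if_neg hoj, Nat.add_mod_right, Nat.mod_eq_of_lt hj.1]

theorem stmt8 (p r : ℕ) (hp : p.Prime) (hp2 : p ≠ 2) (hr : r.Prime) (hr5 : 5 ≤ r)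
    (hrp : r ≠ p) (F : Type) [Field F] [CharP F r] (β : F)
    (hβ : IsPrimitiveRoot β (2*p))
    (S : F → F)
    (hS : S = fun x => 1
      + ∑ i ∈ (Finset.range (2*p)).filter
          (fun t => Nat.Coprime t (2*p) ∧ ¬ IsSquare (((t : ℕ)) : ZMod p)), x ^ i
      + ∑ i ∈ ((Finset.range p).filter
          (fun j => ((j : ℕ) : ZMod p) ≠ 0 ∧ ¬ IsSquare (((j : ℕ)) : ZMod p))).image (fun j => 2*j), x ^ i) :
    S (β ^ 0) = (p : F) ∧ S (β ^ p) = 1 := by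
  set A := (Finset.range (2*p)).filter
      (fun t => Nat.Coprime t (2*p) ∧ ¬ IsSquare (((t : ℕ)) : ZMod p)) with hA
  set B := (Finset.range p).filter
      (fun j => ((j : ℕ) : ZMod p) ≠ 0 ∧ ¬ IsSquare (((j : ℕ)) : ZMod p)) with hB
  have hcardAB : A.card = B.card := card_A p hp hp2
  have hcardB2 : B.card * 2 = p - 1 := card_B p hp hp2
  have hinj : Function.Injective (fun j : ℕ => 2*j) := fun a b h => by
    simpa using h
  have hcardIm : (B.image (fun j => 2*j)).card = B.card :=
    Finset.card_image_of_injective _ hinj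
  have hppos : 0 < p := hp.pos
  constructor
  · -- S 1 = p
    rw [hS]
    simp only [pow_zero, one_pow]
    rw [Finset.sum_const, Finset.sum_const, nsmul_eq_mul, nsmul_eq_mul, mul_one, mul_one]
    rw [hcardIm, hcardAB]
    have : (p : F) = ((B.card * 2 + 1 : ℕ) : F) := by
      congr 1
      omega
    rw [this]
    push_cast
    ring
  · -- S (β^p) = 1
    have hbp : β ^ p = -1 := by
      have h2 : (β ^ p) ^ 2 = 1 := by
        rw [← pow_mul, mul_comm]
        exact hβ.pow_eq_one
      have hne : β ^ p ≠ 1 := fun h =>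
        hβ.pow_ne_one_of_pos_of_lt (by omega) (by omega) h
      rcases sq_eq_one_iff.mp h2 with h | h
      · exact absurd h hne
      · exact h
    rw [hS]
    simp only [hbp]
    have hsum1 : ∑ i ∈ A, (-1 : F) ^ i = -(A.card : F) := by
      rw [Finset.sum_congr rfl (fun i hi => ?_), Finset.sum_const, nsmul_eq_mul,
        mul_neg_one]
      · simp only [hA, Finset.mem_filter, Finset.mem_range] at hi
        obtain ⟨_, hcop, _⟩ := hi
        have hio : Odd i :=
          (Nat.Coprime.coprime_dvd_right (dvd_mul_right 2 p) hcop).odd_of_right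
        exact hio.neg_one_pow
    have hsum2 : ∑ i ∈ B.image (fun j => 2*j), (-1 : F) ^ i = (B.card : F) := by
      rw [Finset.sum_congr rfl (fun i hi => ?_), Finset.sum_const, nsmul_eq_mul, mul_one,
        hcardIm]
      · simp only [Finset.mem_image] at hi
        obtain ⟨j, _, rfl⟩ := hi
        rw [pow_mul]
        simp
    rw [hsum1, hsum2, hcardAB]
    ring
end

section
/- Let p be a prime with p ≡ ±3 (mod 8), r a prime with r ≥ 5, r ≠ p, β a primitive 2p-th root of unity over 𝔽_r, and S(x) = 1 + Σ_{i ∈ D_1^{(2p)}} x^i + Σ_{i ∈ 2D_1^{(p)}} x^i. Then for every k ∈ 2D_0^{(p)} ∪ 2D_1^{(p)} (i.e., k = 2n mod 2p with n ∈ (ℤ/pℤ)*), we have S(β^k) = 0. -/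
open scoped Classical

set_option maxHeartbeats 2000000 in
theorem stmt9 (p r : ℕ) (hp : p.Prime) (hp8 : p % 8 = 3 ∨ p % 8 = 5) (hr : r.Prime)
    (hr5 : 5 ≤ r) (hrp : r ≠ p) (F : Type) [Field F] [CharP F r] (β : F)
    (hβ : IsPrimitiveRoot β (2*p))
    (S : F → F)
    (hS : S = fun x => 1
      + ∑ i ∈ (Finset.range (2*p)).filter
          (fun t => Nat.Coprime t (2*p) ∧ ¬ IsSquare (((t : ℕ)) : ZMod p)), x ^ i
      + ∑ i ∈ ((Finset.range p).filter
          (fun j => ((j : ℕ) : ZMod p) ≠ 0 ∧ ¬ IsSquare (((j : ℕ)) : ZMod p))).image (fun j => 2*j), x ^ i) :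
    ∀ n : ℕ, ¬ p ∣ n → S (β ^ (2 * n)) = 0 := by
  intro n hn
  haveI : Fact p.Prime := ⟨hp⟩
  haveI : NeZero p := ⟨hp.pos.ne'⟩
  have hp2 : p ≠ 2 := by rintro rfl; omega
  have hpodd : p % 2 = 1 := by omega
  have hp1 : 1 < p := hp.one_lt
  -- ζ is a primitive p-th root of unity
  set ζ : F := β ^ 2 with hζdef
  have hζ : IsPrimitiveRoot ζ p := hβ.pow (by omega) rfl
  -- E : ZMod p → F
  set E : ZMod p → F := fun a => ζ ^ a.val with hEdef
  have hE : ∀ k : ℕ, ζ ^ k = E ((k : ℕ) : ZMod p) := by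
    intro k
    conv_lhs => rw [← Nat.div_add_mod k p]
    rw [hEdef]
    simp only [ZMod.val_natCast]
    rw [pow_add, pow_mul, hζ.pow_eq_one, one_pow, one_mul]
  -- sum of E over all of ZMod p is 0
  have hsumuniv : ∑ a : ZMod p, E a = 0 := by
    rw [← hζ.geom_sum_eq_zero hp1]
    apply Finset.sum_bij (fun (a : ZMod p) _ => a.val)
    · intro a _; exact Finset.mem_range.mpr a.val_lt
    · intro a _ b _ h; exact ZMod.val_injective p h
    · intro i hi; exact ⟨(i : ZMod p), Finset.mem_univ _,
        ZMod.val_cast_of_lt (Finset.mem_range.mp hi)⟩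
    · intro a _; rfl
  -- sum of E over nonzero elements is -1
  have hE0 : E 0 = 1 := by simp [hEdef]
  have hsumne : ∑ a ∈ Finset.univ.filter (fun b : ZMod p => b ≠ 0), E a = -1 := by
    have := Finset.sum_filter_add_sum_filter_not Finset.univ (fun b : ZMod p => b ≠ 0) E
    rw [hsumuniv] at this
    have h2 : ∑ a ∈ Finset.univ.filter (fun b : ZMod p => ¬ b ≠ 0), E a = 1 := by
      rw [show Finset.univ.filter (fun b : ZMod p => ¬ b ≠ 0) = {0} by
        ext b; simp [not_not]]
      simp [hE0]
    linear_combination this - h2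
  -- squares multiplicativity
  have hinv : ∀ a : ZMod p, IsSquare a → IsSquare a⁻¹ := by
    rintro a ⟨c, rfl⟩; exact ⟨c⁻¹, by rw [mul_inv]⟩
  have hmul : ∀ a b : ZMod p, a ≠ 0 → b ≠ 0 →
      (IsSquare (a * b) ↔ (IsSquare a ↔ IsSquare b)) := by
    intro a b ha hb
    have hab : a * b ≠ 0 := mul_ne_zero ha hb
    by_cases hsa : IsSquare a <;> by_cases hsb : IsSquare b
    · simp [hsa.mul hsb, hsa, hsb]
    · have hns : ¬ IsSquare (a * b) := by
        intro hsab
        have h := (hinv a hsa).mul hsab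
        rw [show a⁻¹ * (a * b) = b by field_simp] at h
        exact hsb h
      simp [hns, hsa, hsb]
    · have hns : ¬ IsSquare (a * b) := by
        intro hsab
        have h := hsab.mul (hinv b hsb)
        rw [show a * b * b⁻¹ = a by field_simp] at h
        exact hsa h
      simp [hns, hsa, hsb]
    · have h1 : quadraticChar (ZMod p) a = -1 :=
        (quadraticChar_neg_one_iff_not_isSquare).mpr hsa
      have h2 : quadraticChar (ZMod p) b = -1 :=
        (quadraticChar_neg_one_iff_not_isSquare).mpr hsb
      have h3 : quadraticChar (ZMod p) (a * b) = 1 := by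
        rw [map_mul, h1, h2]; ring
      have : IsSquare (a * b) := (quadraticChar_one_iff_isSquare hab).mp h3
      simp [this, hsa, hsb]
  -- 2 is not a square
  have h2ns : ¬ IsSquare (2 : ZMod p) := by
    rw [ZMod.exists_sq_eq_two_iff hp2]
    omega
  have h2ne : (2 : ZMod p) ≠ 0 := by
    intro h
    have h2 : ((2 : ℕ) : ZMod p) = 0 := by exact_mod_cast h
    rw [ZMod.natCast_eq_zero_iff] at h2
    exact hp2 ((Nat.prime_dvd_prime_iff_eq hp Nat.prime_two).mp h2)
  -- the nonresidue finset
  set NR : Finset (ZMod p) := Finset.univ.filter (fun a => ¬ IsSquare a) with hNRdef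
  have hNR0 : ∀ a ∈ NR, a ≠ 0 := by
    intro a ha h
    rw [hNRdef, Finset.mem_filter] at ha
    exact ha.2 (h ▸ ⟨0, by ring⟩)
  -- image of NR under multiplication by nonzero u
  have himg : ∀ u : ZMod p, u ≠ 0 → ∀ g : ZMod p → F,
      ∑ a ∈ NR, g (u * a) =
      ∑ b ∈ Finset.univ.filter (fun b : ZMod p => b ≠ 0 ∧ (IsSquare b ↔ ¬ IsSquare u)), g b := by
    intro u hu g
    apply Finset.sum_bij (fun a _ => u * a)
    · intro a ha
      have ha' : ¬ IsSquare a := (Finset.mem_filter.mp ha).2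
      have han : a ≠ 0 := hNR0 a ha
      refine Finset.mem_filter.mpr ⟨Finset.mem_univ _, mul_ne_zero hu han, ?_⟩
      rw [hmul u a hu han]
      tauto
    · intro a _ b _ h
      exact mul_left_cancel₀ hu h
    · intro b hb
      obtain ⟨-, hbne, hbs⟩ := Finset.mem_filter.mp hb
      refine ⟨u⁻¹ * b, ?_, by field_simp⟩
      rw [hNRdef, Finset.mem_filter]
      refine ⟨Finset.mem_univ _, ?_⟩
      have hiu : u⁻¹ ≠ 0 := inv_ne_zero hu
      have hiu2 : IsSquare u⁻¹ ↔ IsSquare u :=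
        ⟨fun h => by simpa using hinv _ h, hinv u⟩
      rw [hmul u⁻¹ b hiu hbne, hiu2, hbs]
      tauto
    · intro a _; rfl
  -- cast of n is nonzero
  set nb : ZMod p := (n : ZMod p) with hnbdef
  have hnb : nb ≠ 0 := by
    rw [hnbdef, Ne, ZMod.natCast_eq_zero_iff]
    exact hn
  -- reindex first sum
  have hkey : ∀ t : ℕ, t < 2*p → t % 2 = 1 → t = t % p ∨ t = t % p + p := by
    intro t ht _
    have h1 := Nat.div_add_mod t p
    have h2 : t / p < 2 := Nat.div_lt_of_lt_mul (by omega)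
    generalize hq : t / p = q at h1 h2
    generalize hs : t % p = s at h1 ⊢
    have h2' : q = 0 ∨ q = 1 := by omega
    rcases h2' with h | h <;> subst h <;> omega
  have hT : ∀ g : ZMod p → F,
      ∑ t ∈ (Finset.range (2*p)).filter
          (fun t => Nat.Coprime t (2*p) ∧ ¬ IsSquare ((t : ℕ) : ZMod p)), g ((t : ℕ) : ZMod p)
        = ∑ a ∈ NR, g a := by
    intro g
    apply Finset.sum_bij (fun t _ => ((t : ℕ) : ZMod p))
    · intro t ht
      exact Finset.mem_filter.mpr ⟨Finset.mem_univ _, (Finset.mem_filter.mp ht).2.2⟩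
    · intro t1 ht1 t2 ht2 h
      obtain ⟨hm1, hc1, -⟩ := Finset.mem_filter.mp ht1
      obtain ⟨hm2, hc2, -⟩ := Finset.mem_filter.mp ht2
      rw [Finset.mem_range] at hm1 hm2
      have ho1 : t1 % 2 = 1 := by
        have hcc : Nat.Coprime t1 2 := Nat.Coprime.coprime_dvd_right (Dvd.intro p rfl) hc1
        have := (Nat.Prime.coprime_iff_not_dvd Nat.prime_two).mp (Nat.coprime_comm.mp hcc)
        omega
      have ho2 : t2 % 2 = 1 := by
        have hcc : Nat.Coprime t2 2 := Nat.Coprime.coprime_dvd_right (Dvd.intro p rfl) hc2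
        have := (Nat.Prime.coprime_iff_not_dvd Nat.prime_two).mp (Nat.coprime_comm.mp hcc)
        omega
      have hmod : t1 % p = t2 % p := (ZMod.natCast_eq_natCast_iff' _ _ _).mp h
      rcases hkey t1 hm1 ho1 with h1 | h1 <;> rcases hkey t2 hm2 ho2 with h2 | h2 <;>
        rw [hmod] at h1 <;>
        generalize hs : t2 % p = s at h1 h2 <;> omega
    · intro a ha
      have hans : ¬ IsSquare a := (Finset.mem_filter.mp ha).2
      have hane : a ≠ 0 := hNR0 a ha
      have hsne : a.val ≠ 0 := fun h => hane ((ZMod.val_eq_zero a).mp h)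
      have hslt : a.val < p := a.val_lt
      refine ⟨if a.val % 2 = 1 then a.val else a.val + p, ?_, ?_⟩
      · have hodd : (if a.val % 2 = 1 then a.val else a.val + p) % 2 = 1 := by
          split <;> omega
        have hlt : (if a.val % 2 = 1 then a.val else a.val + p) < 2*p := by
          split <;> omega
        have hmodp : (if a.val % 2 = 1 then a.val else a.val + p) % p = a.val := by
          split
          · exact Nat.mod_eq_of_lt hslt
          · rw [Nat.add_mod_right]; exact Nat.mod_eq_of_lt hslt
        have hcast : (((if a.val % 2 = 1 then a.val else a.val + p) : ℕ) : ZMod p) = a := by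
          rw [show ((((if a.val % 2 = 1 then a.val else a.val + p) : ℕ) : ZMod p)) =
            (((if a.val % 2 = 1 then a.val else a.val + p) % p : ℕ) : ZMod p) from
              ((ZMod.natCast_eq_natCast_iff' _ _ _).mpr (by rw [Nat.mod_mod_of_dvd] <;> simp)), hmodp]
          simp [ZMod.natCast_val, ZMod.cast_id]
        refine Finset.mem_filter.mpr ⟨Finset.mem_range.mpr hlt, ?_, ?_⟩
        · rw [Nat.coprime_mul_iff_right]
          constructor
          · exact Nat.coprime_comm.mp ((Nat.Prime.coprime_iff_not_dvd Nat.prime_two).mpr (by omega))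
          · refine Nat.coprime_comm.mp ((Nat.Prime.coprime_iff_not_dvd hp).mpr ?_)
            intro hdvd
            rw [Nat.dvd_iff_mod_eq_zero, hmodp] at hdvd
            exact hsne hdvd
        · rw [hcast]; exact hans
      · rw [show ((((if a.val % 2 = 1 then a.val else a.val + p) : ℕ) : ZMod p)) =
            (((if a.val % 2 = 1 then a.val else a.val + p) % p : ℕ) : ZMod p) from
              ((ZMod.natCast_eq_natCast_iff' _ _ _).mpr (by rw [Nat.mod_mod_of_dvd] <;> simp))]
        rw [show (if a.val % 2 = 1 then a.val else a.val + p) % p = a.val by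
          split
          · exact Nat.mod_eq_of_lt hslt
          · rw [Nat.add_mod_right]; exact Nat.mod_eq_of_lt hslt]
        simp [ZMod.natCast_val, ZMod.cast_id]
    · intro t _; rfl
  -- reindex second sum
  have hJ : ∀ g : ZMod p → F,
      ∑ j ∈ (Finset.range p).filter
          (fun j => ((j : ℕ) : ZMod p) ≠ 0 ∧ ¬ IsSquare ((j : ℕ) : ZMod p)), g ((j : ℕ) : ZMod p)
        = ∑ a ∈ NR, g a := by
    intro g
    apply Finset.sum_bij (fun j _ => ((j : ℕ) : ZMod p))
    · intro j hj
      exact Finset.mem_filter.mpr ⟨Finset.mem_univ _, (Finset.mem_filter.mp hj).2.2⟩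
    · intro j1 hj1 j2 hj2 h
      have hm1 := Finset.mem_range.mp (Finset.mem_filter.mp hj1).1
      have hm2 := Finset.mem_range.mp (Finset.mem_filter.mp hj2).1
      have := (ZMod.natCast_eq_natCast_iff' _ _ _).mp h
      rwa [Nat.mod_eq_of_lt hm1, Nat.mod_eq_of_lt hm2] at this
    · intro a ha
      have hans : ¬ IsSquare a := (Finset.mem_filter.mp ha).2
      have hane : a ≠ 0 := hNR0 a ha
      have hcast : ((a.val : ℕ) : ZMod p) = a := by simp [ZMod.natCast_val, ZMod.cast_id]
      exact ⟨a.val, Finset.mem_filter.mpr ⟨Finset.mem_range.mpr a.val_lt,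
        by rw [hcast]; exact hane, by rw [hcast]; exact hans⟩, hcast⟩
    · intro j _; rfl
  -- the powers
  have hx1 : ∀ t : ℕ, (β ^ (2*n)) ^ t = E (nb * (t : ZMod p)) := by
    intro t
    rw [← pow_mul, show 2*n*t = 2*(n*t) by ring, pow_mul, ← hζdef, hE (n*t)]
    congr 1
    push_cast [hnbdef]
    ring
  have hx2 : ∀ j : ℕ, (β ^ (2*n)) ^ (2*j) = E (2 * nb * (j : ZMod p)) := by
    intro j
    rw [← pow_mul, show 2*n*(2*j) = 2*(n*(2*j)) by ring, pow_mul, ← hζdef, hE (n*(2*j))]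
    congr 1
    push_cast [hnbdef]
    ring
  -- assemble
  have h2nb : IsSquare (2 * nb) ↔ ¬ IsSquare nb := by
    rw [hmul 2 nb h2ne hnb]
    tauto
  have hsum1 : ∑ t ∈ (Finset.range (2*p)).filter
      (fun t => Nat.Coprime t (2*p) ∧ ¬ IsSquare ((t : ℕ) : ZMod p)), (β ^ (2*n)) ^ t
      = ∑ b ∈ Finset.univ.filter
          (fun b : ZMod p => b ≠ 0 ∧ (IsSquare b ↔ ¬ IsSquare nb)), E b := by
    rw [← himg nb hnb E, ← hT (fun a => E (nb * a))]
    exact Finset.sum_congr rfl (fun t _ => hx1 t)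
  have hsum2 : ∑ i ∈ ((Finset.range p).filter
      (fun j => ((j : ℕ) : ZMod p) ≠ 0 ∧ ¬ IsSquare ((j : ℕ) : ZMod p))).image (fun j => 2*j),
        (β ^ (2*n)) ^ i
      = ∑ b ∈ Finset.univ.filter
          (fun b : ZMod p => b ≠ 0 ∧ (IsSquare b ↔ ¬ IsSquare (2 * nb))), E b := by
    rw [Finset.sum_image (by intro x _ y _ h; dsimp only at h; omega)]
    rw [← himg (2 * nb) (mul_ne_zero h2ne hnb) E, ← hJ (fun a => E (2 * nb * a))]
    exact Finset.sum_congr rfl (fun j _ => hx2 j)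
  have hsplit : ∑ b ∈ Finset.univ.filter
          (fun b : ZMod p => b ≠ 0 ∧ (IsSquare b ↔ ¬ IsSquare nb)), E b
      + ∑ b ∈ Finset.univ.filter
          (fun b : ZMod p => b ≠ 0 ∧ (IsSquare b ↔ ¬ IsSquare (2 * nb))), E b = -1 := by
    rw [show (Finset.univ.filter (fun b : ZMod p => b ≠ 0 ∧ (IsSquare b ↔ ¬ IsSquare nb)))
        = (Finset.univ.filter (fun b : ZMod p => b ≠ 0)).filter
            (fun b => IsSquare b ↔ ¬ IsSquare nb) from by
      rw [Finset.filter_filter],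
      show (Finset.univ.filter (fun b : ZMod p => b ≠ 0 ∧ (IsSquare b ↔ ¬ IsSquare (2 * nb))))
        = (Finset.univ.filter (fun b : ZMod p => b ≠ 0)).filter
            (fun b => ¬ (IsSquare b ↔ ¬ IsSquare nb)) from by
      rw [Finset.filter_filter]
      apply Finset.filter_congr
      intro b _
      rw [h2nb]
      constructor
      · rintro ⟨hb0, hbs⟩; exact ⟨hb0, by tauto⟩
      · rintro ⟨hb0, hbs⟩; exact ⟨hb0, by tauto⟩]
    rw [Finset.sum_filter_add_sum_filter_not]
    exact hsumne
  rw [hS]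
  simp only []
  have final : (1 : F)
      + (∑ t ∈ (Finset.range (2*p)).filter
          (fun t => Nat.Coprime t (2*p) ∧ ¬ IsSquare ((t : ℕ) : ZMod p)), (β ^ (2*n)) ^ t)
      + (∑ i ∈ ((Finset.range p).filter
          (fun j => ((j : ℕ) : ZMod p) ≠ 0 ∧ ¬ IsSquare ((j : ℕ) : ZMod p))).image (fun j => 2*j),
            (β ^ (2*n)) ^ i) = 0 := by
    rw [hsum1, hsum2]
    linear_combination hsplit
  convert final using 3
  · exact Finset.sum_congr (by ext t; simp [Finset.mem_filter]) (fun _ _ => rfl)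
  · congr 1
    ext t
    simp [Finset.mem_filter]
end

section
/- Let p be a prime with p ≡ ±1 (mod 8), r a prime with r ≥ 5, r ≠ p, β a primitive 2p-th root of unity over 𝔽_r, and S(x) = 1 + Σ_{i ∈ D_1^{(2p)}} x^i + Σ_{i ∈ 2D_1^{(p)}} x^i. Then for every k ∈ D_0^{(2p)} ∪ D_1^{(2p)} (i.e., k coprime to 2p), we have S(β^k) = 1. -/
open scoped Classical

theorem stmt10 (p r : ℕ) (hp : p.Prime) (hp8 : p % 8 = 1 ∨ p % 8 = 7) (hr : r.Prime)
    (hr5 : 5 ≤ r) (hrp : r ≠ p) (F : Type) [Field F] [CharP F r] (β : F)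
    (hβ : IsPrimitiveRoot β (2*p))
    (S : F → F)
    (hS : S = fun x => 1
      + ∑ i ∈ (Finset.range (2*p)).filter
          (fun t => Nat.Coprime t (2*p) ∧ ¬ IsSquare (((t : ℕ)) : ZMod p)), x ^ i
      + ∑ i ∈ ((Finset.range p).filter
          (fun j => ((j : ℕ) : ZMod p) ≠ 0 ∧ ¬ IsSquare (((j : ℕ)) : ZMod p))).image (fun j => 2*j), x ^ i) :
    ∀ k : ℕ, Nat.Coprime k (2*p) → S (β ^ k) = 1 := by
  intro k hk
  subst hS
  simp only
  have hp0 : 0 < p := hp.pos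
  have hp2 : p ≠ 2 := by rintro rfl; omega
  have hpodd : p % 2 = 1 := by
    have := hp.two_le
    rcases hp8 with h | h <;> omega
  have h2p0 : 0 < 2 * p := by omega
  -- 2 is a nonzero square in ZMod p
  have h2sqr : IsSquare (2 : ZMod p) := by
    haveI : Fact p.Prime := ⟨hp⟩
    exact (ZMod.exists_sq_eq_two_iff hp2).2 hp8
  have h2ne : (2 : ZMod p) ≠ 0 := by
    haveI : Fact p.Prime := ⟨hp⟩
    have h : ((2:ℕ) : ZMod p) ≠ 0 := by
      rw [Ne, ZMod.natCast_eq_zero_iff]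
      intro h
      have := Nat.le_of_dvd (by norm_num) h
      have := hp.two_le
      omega
    simpa using h
  -- IsSquare (2*a) ↔ IsSquare a
  have hsq2 : ∀ a : ZMod p, IsSquare (2 * a) ↔ IsSquare a := by
    intro a
    haveI : Fact p.Prime := ⟨hp⟩
    obtain ⟨c, hc⟩ := h2sqr
    have hcne : c ≠ 0 := by rintro rfl; rw [mul_zero] at hc; exact h2ne hc
    constructor
    · rintro ⟨s, hs⟩
      refine ⟨s * c⁻¹, ?_⟩
      rw [hc] at hs
      field_simp
      linear_combination hs
    · rintro ⟨s, hs⟩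
      exact ⟨c * s, by rw [hs, hc]; ring⟩
  -- coprimality characterization
  have hcop : ∀ t : ℕ, Nat.Coprime t (2*p) ↔ (t % 2 = 1 ∧ (t : ZMod p) ≠ 0) := by
    intro t
    haveI : Fact p.Prime := ⟨hp⟩
    rw [Nat.coprime_mul_iff_right]
    apply and_congr
    · rw [Nat.coprime_comm, Nat.Prime.coprime_iff_not_dvd Nat.prime_two,
        Nat.dvd_iff_mod_eq_zero]
      omega
    · rw [Nat.coprime_comm, hp.coprime_iff_not_dvd, Ne,
        ZMod.natCast_eq_zero_iff]
  have hk2 : k % 2 = 1 := ((hcop k).mp hk).1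
  -- explicit form of the key map
  have key : ∀ j : ℕ, j < p → (2*j+p) % (2*p) = if 2*j < p then 2*j + p else 2*j - p := by
    intro j hj
    split_ifs with h
    · exact Nat.mod_eq_of_lt (by omega)
    · rw [Nat.mod_eq_sub_mod (by omega)]
      have : 2*j+p - 2*p = 2*j - p := by omega
      rw [this, Nat.mod_eq_of_lt (by omega)]
  -- cast of the key map to ZMod p
  have keycast : ∀ j : ℕ, j < p → (((2*j+p) % (2*p) : ℕ) : ZMod p) = 2 * (j : ZMod p) := by
    intro j hj
    rw [key j hj]
    split_ifs with h
    · push_cast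
      simp [ZMod.natCast_self]
    · have h1 : ((2*j - p : ℕ) : ZMod p) + ((p:ℕ) : ZMod p) = ((2*j : ℕ) : ZMod p) := by
        rw [← Nat.cast_add]
        congr 1
        omega
      rw [ZMod.natCast_self, add_zero] at h1
      rw [h1]
      push_cast
      ring
  -- the first index set is the image of the second under j ↦ (2j+p) % (2p)
  set B : Finset ℕ := (Finset.range p).filter
      (fun j => ((j : ℕ) : ZMod p) ≠ 0 ∧ ¬ IsSquare (((j : ℕ)) : ZMod p)) with hB
  have hA : (Finset.range (2*p)).filter
      (fun t => Nat.Coprime t (2*p) ∧ ¬ IsSquare (((t : ℕ)) : ZMod p))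
      = B.image (fun j => (2*j+p) % (2*p)) := by
    haveI : Fact p.Prime := ⟨hp⟩
    ext t
    simp only [Finset.mem_image, Finset.mem_filter, Finset.mem_range, hB]
    constructor
    · rintro ⟨ht2p, htcop, htsq⟩
      obtain ⟨ht2, htz⟩ := (hcop t).mp htcop
      by_cases htp : t < p
      · refine ⟨(t+p)/2, ⟨by omega, ?_, ?_⟩, ?_⟩
        · intro h0
          have h2j : 2 * (((t+p)/2 : ℕ) : ZMod p) = (t : ZMod p) := by
            have : ((2 * ((t+p)/2) : ℕ) : ZMod p) = ((t + p : ℕ) : ZMod p) := by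
              congr 1; omega
            push_cast [ZMod.natCast_self] at this
            simpa using this
          rw [h0, mul_zero] at h2j
          exact htz h2j.symm
        · intro hsqj
          have h2j : 2 * (((t+p)/2 : ℕ) : ZMod p) = (t : ZMod p) := by
            have : ((2 * ((t+p)/2) : ℕ) : ZMod p) = ((t + p : ℕ) : ZMod p) := by
              congr 1; omega
            push_cast [ZMod.natCast_self] at this
            simpa using this
          exact htsq (h2j ▸ (hsq2 _).mpr hsqj)
        · rw [key _ (by omega)]
          split_ifs with h <;> omega
      · refine ⟨(t-p)/2, ⟨by omega, ?_, ?_⟩, ?_⟩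
        · intro h0
          have h2j : 2 * (((t-p)/2 : ℕ) : ZMod p) = (t : ZMod p) := by
            have h1 : ((2 * ((t-p)/2) : ℕ) : ZMod p) + ((p:ℕ) : ZMod p) = ((t:ℕ) : ZMod p) := by
              rw [← Nat.cast_add]; congr 1; omega
            rw [ZMod.natCast_self, add_zero] at h1
            rw [← h1]; push_cast; ring
          rw [h0, mul_zero] at h2j
          exact htz h2j.symm
        · intro hsqj
          have h2j : 2 * (((t-p)/2 : ℕ) : ZMod p) = (t : ZMod p) := by
            have h1 : ((2 * ((t-p)/2) : ℕ) : ZMod p) + ((p:ℕ) : ZMod p) = ((t:ℕ) : ZMod p) := by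
              rw [← Nat.cast_add]; congr 1; omega
            rw [ZMod.natCast_self, add_zero] at h1
            rw [← h1]; push_cast; ring
          exact htsq (h2j ▸ (hsq2 _).mpr hsqj)
        · rw [key _ (by omega)]
          split_ifs with h <;> omega
    · rintro ⟨j, ⟨hj, hjz, hjsq⟩, rfl⟩
      have hc := keycast j hj
      refine ⟨Nat.mod_lt _ h2p0, (hcop _).mpr ⟨?_, ?_⟩, ?_⟩
      · have hmm : (2*j+p) % (2*p) % 2 = (2*j+p) % 2 :=
          Nat.mod_mod_of_dvd _ (dvd_mul_right 2 p)
        omega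
      · rw [hc]
        exact mul_ne_zero h2ne hjz
      · rw [hc]
        exact fun h => hjsq ((hsq2 _).mp h)
  -- injectivity of the map on B
  have hinj : ∀ j1 ∈ B, ∀ j2 ∈ B, (2*j1+p) % (2*p) = (2*j2+p) % (2*p) → j1 = j2 := by
    intro j1 hj1 j2 hj2 h
    simp only [hB, Finset.mem_filter, Finset.mem_range] at hj1 hj2
    rw [key _ hj1.1, key _ hj2.1] at h
    split_ifs at h <;> omega
  -- basic root facts
  have hx1 : (β ^ k) ^ (2*p) = 1 := by
    rw [← pow_mul, mul_comm, pow_mul, hβ.pow_eq_one, one_pow]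
  have hβp : β ^ p = -1 :=
    (hβ.pow h2p0 (mul_comm 2 p)).eq_neg_one_of_two_right
  have hxp : (β ^ k) ^ p = -1 := by
    rw [← pow_mul, mul_comm, pow_mul, hβp]
    exact Odd.neg_one_pow (Nat.odd_iff.mpr hk2)
  -- rewrite the two sums
  rw [hA, Finset.sum_image hinj, Finset.sum_image (fun a _ b _ h => by omega : ∀ a ∈ B, ∀ b ∈ B, 2*a = 2*b → a = b)]
  have hterm : ∀ j ∈ B, (β ^ k) ^ ((2*j+p) % (2*p)) = - (β ^ k) ^ (2*j) := by
    intro j hj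
    rw [← pow_eq_pow_mod _ hx1, pow_add, hxp, mul_neg_one]
  rw [Finset.sum_congr rfl hterm, Finset.sum_neg_distrib]
  ring
end

section
/- Let p be a prime with p ≡ ±1 (mod 8), r a prime with r ≥ 5, r ≠ p, and suppose r is a quadratic nonresidue modulo p. Then the generating polynomial S(x) = 1 + Σ_{i ∈ D_1^{(2p)}} x^i + Σ_{i ∈ 2D_1^{(p)}} x^i satisfies gcd(S(x), x^{2p} - 1) = 1 over 𝔽_{r^m} where m = ord_p(r); equivalently, the linear complexity of the binary sequence s of period 2p with support C_1 = D_1^{(2p)} ∪ 2D_1^{(p)} ∪ {0} over 𝔽_{r^m} equals 2p. -/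
open scoped Classical
open Polynomial

section Aux

variable {K : Type*} [Field K]

private lemma stmt11_eval (p : ℕ) [Fact p.Prime] (hp8 : p % 8 = 1 ∨ p % 8 = 7)
    (hpK : ((p : ℕ) : K) ≠ 0) (h2K : (2 : K) ≠ 0)
    (u : ZMod p) (hu : ¬ IsSquare u)
    (ω : K) (hω : ω ^ (2*p) = 1)
    (S : Polynomial K)
    (hS : S = 1
      + ∑ i ∈ (Finset.range (2*p)).filter
          (fun t => Nat.Coprime t (2*p) ∧ ¬ IsSquare (((t : ℕ)) : ZMod p)), X ^ i
      + ∑ i ∈ ((Finset.range p).filter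
          (fun j => ((j : ℕ) : ZMod p) ≠ 0 ∧ ¬ IsSquare (((j : ℕ)) : ZMod p))).image (fun j => 2*j), X ^ i) :
    S.eval ω ≠ 0 := by
  have hp : p.Prime := Fact.out
  have hp2 : p ≠ 2 := by rintro rfl; omega
  have hpodd : p % 2 = 1 := by rcases hp8 with h | h <;> omega
  have hp1 : 1 < p := hp.one_lt
  have h2sq : IsSquare (2 : ZMod p) := (ZMod.exists_sq_eq_two_iff hp2).mpr hp8
  have hm1 : (-1 : K) ≠ 1 := fun h => h2K (by linear_combination -h)
  set ε : K := ω ^ p with hε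
  set δ : K := ω ^ (p+1) with hδ
  have hδp : δ ^ p = 1 := by
    rw [hδ, ← pow_mul]
    have h2 : 2 * ((p+1)/2) = p + 1 := by omega
    have hexp : (p+1) * p = (2*p) * ((p+1)/2) := by
      calc (p+1) * p = (2 * ((p+1)/2)) * p := by rw [h2]
        _ = (2*p) * ((p+1)/2) := by ring
    rw [hexp, pow_mul, hω, one_pow]
  have hεsq : ε = 1 ∨ ε = -1 := by
    have : ε * ε = 1 := by
      rw [hε, ← pow_add]
      have : p + p = 2 * p := by omega
      rw [this, hω]
    exact mul_self_eq_one_iff.mp this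
  set ψ : AddChar (ZMod p) K := AddChar.zmodChar p hδp with hψ
  set NR : Finset (ZMod p) := Finset.univ.filter (fun a => a ≠ 0 ∧ ¬ IsSquare a) with hNR
  set η : K := ∑ a ∈ NR, ψ a with hη
  have hpd : ∀ t : ℕ, t.Coprime (2*p) → ¬ p ∣ t := by
    intro t hcop hdvd
    have h1 : p ∣ Nat.gcd t (2*p) := Nat.dvd_gcd hdvd ⟨2, by ring⟩
    rw [hcop] at h1
    have := Nat.le_of_dvd one_pos h1
    omega
  -- odd t: coprime to 2p implies odd
  have hodd : ∀ t : ℕ, t.Coprime (2*p) → t % 2 = 1 := by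
    intro t hcop
    rcases Nat.even_or_odd t with he | ho
    · exfalso
      have h1 : 2 ∣ Nat.gcd t (2*p) := Nat.dvd_gcd he.two_dvd ⟨p, rfl⟩
      rw [hcop] at h1; omega
    · exact Nat.odd_iff.mp ho
  -- Lemma A : sum over the odd-coprime nonresidue set equals η
  have hA : (∑ t ∈ (Finset.range (2*p)).filter
      (fun t => Nat.Coprime t (2*p) ∧ ¬ IsSquare (((t : ℕ)) : ZMod p)), δ ^ t) = η := by
    rw [hη]
    refine Finset.sum_bij' (fun t _ => ((t : ℕ) : ZMod p))
      (fun a _ => if 2 ∣ a.val then a.val + p else a.val) ?_ ?_ ?_ ?_ ?_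
    · intro t ht
      simp only [Finset.mem_filter, Finset.mem_range] at ht
      simp only [hNR, Finset.mem_filter, Finset.mem_univ, true_and]
      refine ⟨?_, ht.2.2⟩
      intro h0
      exact hpd t ht.2.1 ((ZMod.natCast_eq_zero_iff t p).mp h0)
    · intro a ha
      simp only [hNR, Finset.mem_filter, Finset.mem_univ, true_and] at ha
      have hval : a.val < p := ZMod.val_lt a
      have hvne : a.val ≠ 0 := fun h => ha.1 ((ZMod.val_eq_zero a).mp h)
      have hcast : ∀ t : ℕ, (t = a.val ∨ t = a.val + p) → ((t : ℕ) : ZMod p) = a := by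
        rintro t (rfl | rfl)
        · exact ZMod.natCast_rightInverse a
        · push_cast
          rw [ZMod.natCast_self, add_zero]
          exact ZMod.natCast_rightInverse a
      have hnd : ∀ t : ℕ, (t = a.val ∨ t = a.val + p) → ¬ p ∣ t := by
        rintro t ht hdvd
        have : p ∣ a.val := by
          rcases ht with rfl | rfl
          · exact hdvd
          · simpa using Nat.dvd_sub hdvd (dvd_refl p)
        exact hvne (Nat.eq_zero_of_dvd_of_lt this hval)
      set t : ℕ := if 2 ∣ a.val then a.val + p else a.val with hts
      have htor : t = a.val ∨ t = a.val + p := by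
        by_cases h : 2 ∣ a.val <;> simp [hts, h]
      have htodd : t % 2 = 1 := by
        by_cases h : 2 ∣ a.val <;> simp only [hts, if_pos, if_neg, h, if_true, if_false] <;> omega
      simp only [Finset.mem_filter, Finset.mem_range]
      refine ⟨?_, ?_, ?_⟩
      · rcases htor with h | h <;> omega
      · rw [Nat.coprime_mul_iff_right]
        constructor
        · exact ((Nat.prime_two.coprime_iff_not_dvd).mpr (by omega)).symm
        · exact ((hp.coprime_iff_not_dvd).mpr (hnd t htor)).symm
      · rw [hcast t htor]; exact ha.2
    · intro t ht
      simp only [Finset.mem_filter, Finset.mem_range] at ht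
      have h2 : t % 2 = 1 := hodd t ht.2.1
      rw [ZMod.val_natCast]
      rcases Nat.lt_or_ge t p with h | h
      · rw [Nat.mod_eq_of_lt h]
        have : ¬ 2 ∣ t := by omega
        simp [this]
      · have hmod : t % p = t - p := by
          rw [Nat.mod_eq_sub_mod h, Nat.mod_eq_of_lt (by omega)]
        rw [hmod]
        have : 2 ∣ t - p := by omega
        simp only [this, if_true]
        omega
    · intro a ha
      simp only [hNR, Finset.mem_filter, Finset.mem_univ, true_and] at ha
      by_cases h : 2 ∣ a.val <;> simp only [h, if_true, if_false]
      · push_cast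
        rw [ZMod.natCast_self, add_zero]
        exact ZMod.natCast_rightInverse a
      · exact ZMod.natCast_rightInverse a
    · intro t ht
      exact (AddChar.zmodChar_apply' hδp t).symm
  have h20 : (2 : ZMod p) ≠ 0 := by
    have h2' : ((2:ℕ) : ZMod p) ≠ 0 := by
      rw [Ne, ZMod.natCast_eq_zero_iff]
      intro h
      have := Nat.le_of_dvd two_pos h
      omega
    exact_mod_cast h2'
  obtain ⟨s2, hs2⟩ := h2sq
  have hinv2 : IsSquare ((2:ZMod p)⁻¹) := ⟨s2⁻¹, by rw [hs2, mul_inv]⟩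
  have hdown : ∀ a : ZMod p, IsSquare (2*a) → IsSquare a := by
    intro a h
    have h' := hinv2.mul h
    rwa [inv_mul_cancel_left₀ h20] at h'
  have hup : ∀ a : ZMod p, IsSquare a → IsSquare (2*a) := by
    intro a h
    have h2sq' : IsSquare (2:ZMod p) := ⟨s2, hs2⟩
    exact h2sq'.mul h
  have hBsum : (∑ j ∈ (Finset.range p).filter
      (fun j => ((j : ℕ) : ZMod p) ≠ 0 ∧ ¬ IsSquare (((j : ℕ)) : ZMod p)), δ ^ (2*j)) = η := by
    have step1 : (∑ j ∈ (Finset.range p).filter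
        (fun j => ((j : ℕ) : ZMod p) ≠ 0 ∧ ¬ IsSquare (((j : ℕ)) : ZMod p)), δ ^ (2*j))
        = ∑ a ∈ NR, ψ (2*a) := by
      refine Finset.sum_bij' (fun j _ => ((j:ℕ) : ZMod p)) (fun a _ => a.val) ?_ ?_ ?_ ?_ ?_
      · intro j hj
        simp only [Finset.mem_filter, Finset.mem_range] at hj
        simp only [hNR, Finset.mem_filter, Finset.mem_univ, true_and]
        exact ⟨hj.2.1, hj.2.2⟩
      · intro a ha
        simp only [hNR, Finset.mem_filter, Finset.mem_univ, true_and] at ha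
        simp only [Finset.mem_filter, Finset.mem_range]
        rw [ZMod.natCast_rightInverse a]
        exact ⟨ZMod.val_lt a, ha.1, ha.2⟩
      · intro j hj
        simp only [Finset.mem_filter, Finset.mem_range] at hj
        exact ZMod.val_cast_of_lt hj.1
      · intro a ha
        exact ZMod.natCast_rightInverse a
      · intro j hj
        have h' := AddChar.zmodChar_apply' hδp (2*j)
        rw [show (((2*j : ℕ)) : ZMod p) = 2 * ((j:ℕ) : ZMod p) by push_cast; ring] at h'
        rw [← h']
    have step2 : (∑ a ∈ NR, ψ (2*a)) = η := by
      rw [hη]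
      refine Finset.sum_bij' (fun a _ => 2*a) (fun b _ => (2:ZMod p)⁻¹ * b) ?_ ?_ ?_ ?_ ?_
      · intro a ha
        simp only [hNR, Finset.mem_filter, Finset.mem_univ, true_and] at ha ⊢
        exact ⟨mul_ne_zero h20 ha.1, fun h => ha.2 (hdown a h)⟩
      · intro b hb
        simp only [hNR, Finset.mem_filter, Finset.mem_univ, true_and] at hb ⊢
        refine ⟨mul_ne_zero (inv_ne_zero h20) hb.1, fun h => hb.2 ?_⟩
        have h' := hup _ h
        rwa [mul_inv_cancel_left₀ h20] at h'
      · intro a ha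
        exact inv_mul_cancel_left₀ h20 a
      · intro b hb
        exact mul_inv_cancel_left₀ h20 b
      · intro a ha
        rfl
    rw [step1, step2]
  -- exponent manipulation
  have hωt : ∀ t : ℕ, t % 2 = 1 → ω ^ t = ε * δ ^ t := by
    intro t ht
    have h2 : 2 * ((t+1)/2) = t + 1 := by omega
    have hexp : p + (p+1)*t = (2*p) * ((t+1)/2) + t := by
      calc p + (p+1)*t = p * (t+1) + t := by ring
        _ = p * (2 * ((t+1)/2)) + t := by rw [h2]
        _ = (2*p) * ((t+1)/2) + t := by ring
    rw [hε, hδ, ← pow_mul, ← pow_add, hexp, pow_add, pow_mul, hω, one_pow, one_mul]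
  have hω2 : ∀ j : ℕ, ω ^ (2*j) = δ ^ (2*j) := by
    intro j
    have hstep : δ ^ (2*j) = ω ^ ((p+1)*(2*j)) := by rw [hδ, ← pow_mul]
    have h1 : ω ^ ((2*p)*j) = 1 := by rw [pow_mul, hω, one_pow]
    rw [hstep, show (p+1)*(2*j) = (2*p)*j + 2*j from by ring, pow_add, h1, one_mul]
  have heval : S.eval ω = 1 + ε * η + η := by
    rw [hS]
    simp only [Polynomial.eval_add, Polynomial.eval_one, Polynomial.eval_finset_sum,
      Polynomial.eval_pow, Polynomial.eval_X]
    congr 1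
    · congr 1
      rw [← hA, Finset.mul_sum]
      refine Finset.sum_congr rfl fun t ht => ?_
      simp only [Finset.mem_filter, Finset.mem_range] at ht
      exact hωt t (hodd t ht.2.1)
    · rw [Finset.sum_image (by intro a _ b _ h; simp only at h; omega), ← hBsum]
      exact Finset.sum_congr rfl fun j _ => hω2 j
  -- quadratic character and Gauss sum
  set χ : MulChar (ZMod p) K := (quadraticChar (ZMod p)).ringHomComp (Int.castRingHom K) with hχ
  have hχu : ∀ a : ZMod p, χ a = ((quadraticChar (ZMod p) a : ℤ) : K) := fun a => rfl
  have hχ1 : χ ≠ 1 := by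
    rw [MulChar.ne_one_iff]
    have hu0 : u ≠ 0 := fun h => hu (h ▸ ⟨0, by simp⟩)
    refine ⟨(Ne.isUnit hu0).unit, ?_⟩
    rw [IsUnit.unit_spec, hχu, quadraticChar_neg_one_iff_not_isSquare.mpr hu]
    simpa using hm1
  have hsplit : (∑ a, ψ a) - gaussSum χ ψ = 1 + 2 * η := by
    unfold gaussSum
    rw [← Finset.sum_sub_distrib]
    rw [← Finset.add_sum_erase _ _ (Finset.mem_univ (0 : ZMod p))]
    have h0term : ψ 0 - χ 0 * ψ 0 = 1 := by
      rw [AddChar.map_zero_eq_one, hχu, quadraticChar_zero]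
      push_cast
      ring
    rw [h0term]
    congr 1
    have hvanish : ∀ x ∈ Finset.univ.erase (0 : ZMod p), (ψ x - χ x * ψ x) ≠ 0 → ¬ IsSquare x := by
      intro x hx hne hsq
      have hx0 : x ≠ 0 := (Finset.mem_erase.mp hx).1
      apply hne
      rw [hχu, (quadraticChar_one_iff_isSquare hx0).mpr hsq]
      simp
    rw [← Finset.sum_filter_of_ne hvanish]
    have hset : (Finset.univ.erase (0 : ZMod p)).filter (fun x => ¬ IsSquare x) = NR := by
      ext x
      simp only [hNR, Finset.mem_filter, Finset.mem_erase, Finset.mem_univ, true_and, and_true]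
    rw [hset, hη, Finset.mul_sum]
    refine Finset.sum_congr rfl fun a ha => ?_
    simp only [hNR, Finset.mem_filter, Finset.mem_univ, true_and] at ha
    rw [hχu, quadraticChar_neg_one_iff_not_isSquare.mpr ha.2]
    push_cast
    ring
  rcases hεsq with hε1 | hε1
  · -- ε = 1
    rw [heval, hε1, one_mul]
    have hval : (1:K) + η + η = 1 + 2 * η := by ring
    rw [hval, ← hsplit]
    by_cases hδ1 : δ = 1
    · have hψ1 : ∀ a : ZMod p, ψ a = 1 := by
        intro a
        rw [hψ, AddChar.zmodChar_apply, hδ1, one_pow]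
      have hT : (∑ a, ψ a) = (p : K) := by
        rw [Finset.sum_congr rfl (fun a _ => hψ1 a), Finset.sum_const, Finset.card_univ,
          ZMod.card, nsmul_eq_mul, mul_one]
      have hg : gaussSum χ ψ = 0 := by
        unfold gaussSum
        calc (∑ a, χ a * ψ a) = ∑ a, χ a :=
              Finset.sum_congr rfl (fun a _ => by rw [hψ1, mul_one])
          _ = 0 := MulChar.sum_eq_zero_of_ne_one hχ1
      rw [hT, hg, sub_zero]
      exact hpK
    · haveI : Fact (1 < p) := ⟨hp1⟩
      have horder : orderOf δ = p := by
        have hdvd : orderOf δ ∣ p := orderOf_dvd_of_pow_eq_one hδp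
        rcases hp.eq_one_or_self_of_dvd _ hdvd with h | h
        · exact absurd (orderOf_eq_one_iff.mp h) hδ1
        · exact h
      have hprim : IsPrimitiveRoot δ p := horder ▸ IsPrimitiveRoot.orderOf δ
      have hψprim : ψ.IsPrimitive := AddChar.zmodChar_primitive_of_primitive_root p hprim
      have hT : (∑ a, ψ a) = 0 := by
        apply AddChar.sum_eq_zero_of_ne_one
        intro h
        apply hδ1
        have hδψ : δ = ψ (1 : ZMod p) := by
          rw [hψ, AddChar.zmodChar_apply, ZMod.val_one p, pow_one]
        rw [h, AddChar.one_apply] at hδψ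
        exact hδψ
      have hg : gaussSum χ ψ ≠ 0 :=
        gaussSum_ne_zero_of_nontrivial (by rwa [ZMod.card]) hχ1 hψprim
      rw [hT, zero_sub]
      exact neg_ne_zero.mpr hg
  · rw [heval, hε1]
    have hval : (1:K) + (-1) * η + η = 1 := by ring
    rw [hval]
    exact one_ne_zero


end Aux

theorem stmt11 (p r : ℕ) [Fact p.Prime] [Fact r.Prime] (hp8 : p % 8 = 1 ∨ p % 8 = 7)
    (hr5 : 5 ≤ r) (hrp : r ≠ p) (hrnr : ¬ IsSquare ((r : ZMod p)))
    (m : ℕ) (hm : m = orderOf ((r : ZMod p)))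
    (S : Polynomial (GaloisField r m))
    (hS : S = 1
      + ∑ i ∈ (Finset.range (2*p)).filter
          (fun t => Nat.Coprime t (2*p) ∧ ¬ IsSquare (((t : ℕ)) : ZMod p)), X ^ i
      + ∑ i ∈ ((Finset.range p).filter
          (fun j => ((j : ℕ) : ZMod p) ≠ 0 ∧ ¬ IsSquare (((j : ℕ)) : ZMod p))).image (fun j => 2*j), X ^ i) :
    IsCoprime S (X ^ (2*p) - 1) ∧
    2*p - (EuclideanDomain.gcd S (X ^ (2*p) - 1)).natDegree = 2*p := by
  have hp : p.Prime := Fact.out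
  have hr : r.Prime := Fact.out
  have hp2 : p ≠ 2 := by rintro rfl; omega
  have hp1 : 1 < p := hp.one_lt
  set K := GaloisField r m with hK
  have hpK : ((p : ℕ) : K) ≠ 0 := by
    rw [Ne, CharP.cast_eq_zero_iff K r p]
    intro h
    exact hrp ((Nat.prime_dvd_prime_iff_eq hr hp).mp h)
  have h2K : (2 : K) ≠ 0 := by
    have h2' : ((2:ℕ) : K) ≠ 0 := by
      rw [Ne, CharP.cast_eq_zero_iff K r 2]
      intro h
      have := Nat.le_of_dvd two_pos h
      omega
    exact_mod_cast h2'
  -- m is positive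
  have hrp0 : ¬ p ∣ r := fun h => hrp ((Nat.prime_dvd_prime_iff_eq hp hr).mp h).symm
  have hrz : ((r : ℕ) : ZMod p) ≠ 0 := by
    rw [Ne, ZMod.natCast_eq_zero_iff]
    exact hrp0
  have hunit : IsUnit ((r : ℕ) : ZMod p) := Ne.isUnit hrz
  have hm0 : m ≠ 0 := by
    rw [hm, ← hunit.unit_spec, orderOf_units]
    exact (orderOf_pos hunit.unit).ne'
  have hcard : Nat.card K = r ^ m := GaloisField.card r m hm0
  have hrm1 : 1 < r ^ m := Nat.one_lt_pow hm0 (by omega)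
  -- 2p divides r^m - 1
  have hordm : ((r : ℕ) : ZMod p) ^ m = 1 := by rw [hm]; exact pow_orderOf_eq_one _
  have hpdvd : p ∣ r ^ m - 1 := by
    rw [← ZMod.natCast_eq_zero_iff]
    rw [Nat.cast_sub (le_of_lt hrm1)]
    push_cast
    rw [hordm, sub_self]
  have hrodd : r % 2 = 1 := by
    rcases Nat.even_or_odd r with he | ho
    · obtain ⟨c, hc⟩ := he
      have h2r : 2 ∣ r := ⟨c, by omega⟩
      rcases (hr.eq_one_or_self_of_dvd 2 h2r) with h | h <;> omega
    · exact Nat.odd_iff.mp ho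
  have h2dvd : 2 ∣ r ^ m - 1 := by
    have : Odd (r ^ m) := (Nat.odd_iff.mpr hrodd).pow
    rw [Nat.odd_iff] at this
    omega
  have hpodd : p % 2 = 1 := by rcases hp8 with h | h <;> omega
  have h2p : 2 * p ∣ r ^ m - 1 :=
    Nat.Coprime.mul_dvd_of_dvd_of_dvd
      ((Nat.prime_two.coprime_iff_not_dvd).mpr (by omega)) h2dvd hpdvd
  -- a primitive (2p)-th root of unity in K
  obtain ⟨g, hg⟩ := IsCyclic.exists_ofOrder_eq_natCard (α := Kˣ)
  have hcardu : Nat.card Kˣ = r ^ m - 1 := by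
    rw [Nat.card_units, hcard]
  have hord : orderOf g = r ^ m - 1 := hg.trans hcardu
  have hordne : orderOf g ≠ 0 := by omega
  have horddvd : 2 * p ∣ orderOf g := by rw [hord]; exact h2p
  have hζu : orderOf (g ^ (orderOf g / (2 * p))) = 2 * p :=
    orderOf_pow_orderOf_div hordne horddvd
  set ζu : Kˣ := g ^ (orderOf g / (2 * p)) with hζudef
  have hζord : orderOf ((ζu : K)) = 2 * p := by rw [orderOf_units]; exact hζu
  have hζ : IsPrimitiveRoot ((ζu : K)) (2 * p) := hζord ▸ IsPrimitiveRoot.orderOf (ζu : K)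
  have h2ppos : 0 < 2 * p := by omega
  have hfactor : (X ^ (2 * p) - 1 : K[X]) = ∏ μ ∈ Polynomial.nthRootsFinset (2 * p) (1 : K), (X - C μ) :=
    Polynomial.X_pow_sub_one_eq_prod h2ppos hζ
  have hcop : IsCoprime S (X ^ (2 * p) - 1 : K[X]) := by
    rw [hfactor]
    apply IsCoprime.prod_right
    intro μ hμ
    have hμ1 : μ ^ (2 * p) = 1 := (Polynomial.mem_nthRootsFinset h2ppos (1 : K)).mp hμ
    have heval : S.eval μ ≠ 0 :=
      stmt11_eval p hp8 hpK h2K ((r : ℕ) : ZMod p) hrnr μ hμ1 S hS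
    have hirr : Irreducible (X - C μ : K[X]) := Polynomial.irreducible_X_sub_C μ
    refine (hirr.coprime_iff_not_dvd.mpr ?_).symm
    rw [Polynomial.dvd_iff_isRoot]
    exact heval
  refine ⟨hcop, ?_⟩
  have hgunit : IsUnit (EuclideanDomain.gcd S (X ^ (2 * p) - 1 : K[X])) :=
    EuclideanDomain.gcd_isUnit_iff.mpr hcop
  rw [Polynomial.natDegree_eq_zero_of_isUnit hgunit]
  omega
end

section
/- Let p be an odd prime, N = 2p, and G_p = Σ_{a=1}^{p-1} χ(a)·2^{2a} mod (2^N - 1), where χ is the Legendre symbol modulo p. Then G_p² ≡ χ(-1)·(p - (2^N - 1)/3) (mod 2^N - 1). -/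
open Finset

private lemma geom_nat13 (m : ℕ) : 3 * ∑ a ∈ Finset.range m, 4^a = 4^m - 1 := by
  induction m with
  | zero => simp
  | succ k ih =>
    have h : 1 ≤ 4^k := Nat.one_le_pow _ _ (by norm_num)
    rw [Finset.sum_range_succ, Nat.mul_add, ih, pow_succ]
    omega

theorem stmt13 (p : ℕ) [Fact p.Prime] (hp : p ≠ 2)
    (G : ZMod (2^(2*p) - 1))
    (hG : G = ∑ a ∈ Finset.Ico 1 p, ((legendreSym p (a : ℤ) : ℤ) : ZMod (2^(2*p) - 1)) * 2^(2*a)) :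
    G ^ 2 = ((legendreSym p (-1) : ℤ) : ZMod (2^(2*p) - 1))
      * ((p : ZMod (2^(2*p) - 1)) - (((2^(2*p) - 1) / 3 : ℕ) : ZMod (2^(2*p) - 1))) := by
  have hpp : p.Prime := Fact.out
  have hp2 : 2 ≤ p := hpp.two_le
  have hp3 : 3 ≤ p := lt_of_le_of_ne hp2 (Ne.symm hp)
  have h2pow : (1 : ℕ) ≤ 2^(2*p) := Nat.one_le_two_pow
  have hone : ((2^(2*p) : ℕ) : ZMod (2^(2*p) - 1)) = 1 := by
    have h := ZMod.natCast_self (2^(2*p) - 1)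
    have h2 : ((2^(2*p) : ℕ) : ZMod (2^(2*p) - 1))
        = ((2^(2*p) - 1 : ℕ) : ZMod (2^(2*p) - 1)) + 1 := by
      rw [← Nat.cast_one (R := ZMod (2^(2*p) - 1)), ← Nat.cast_add]
      congr 1
      omega
    rw [h2, h, zero_add]
  have h4p : (4 : ZMod (2^(2*p) - 1))^p = 1 := by
    have h : (4 : ZMod (2^(2*p) - 1))^p = ((2^(2*p) : ℕ) : ZMod (2^(2*p) - 1)) := by
      push_cast
      rw [show (4 : ZMod (2^(2*p) - 1)) = 2^2 by norm_num, ← pow_mul]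
    rw [h, hone]
  have h4mod : ∀ m : ℕ, (4 : ZMod (2^(2*p) - 1))^m = 4^(m % p) := by
    intro m
    conv_lhs => rw [← Nat.div_add_mod m p]
    rw [pow_add (4 : ZMod (2^(2*p) - 1)) (p * (m / p)) (m % p),
      pow_mul (4 : ZMod (2^(2*p) - 1)) p (m / p), h4p, one_pow, one_mul]
  set ψ : ZMod p → ZMod (2^(2*p) - 1) := fun x => 4 ^ x.val with hψdef
  set χ : ZMod p → ZMod (2^(2*p) - 1) := fun x => ((quadraticChar (ZMod p) x : ℤ) : ZMod (2^(2*p) - 1)) with hχdef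
  have hψ_add : ∀ x y : ZMod p, ψ (x + y) = ψ x * ψ y := by
    intro x y
    simp only [hψdef, ZMod.val_add, ← h4mod, ← pow_add]
  have hψ0 : ψ 0 = 1 := by simp [hψdef]
  have hχ0 : χ 0 = 0 := by simp [hχdef]
  have hχ_mul : ∀ x y : ZMod p, χ (x * y) = χ x * χ y := by
    intro x y
    simp only [hχdef, map_mul]
    push_cast
    ring
  have hχ_sq : ∀ x : ZMod p, x ≠ 0 → χ x * χ x = 1 := by
    intro x hx
    have h := quadraticChar_sq_one hx
    have h2 := congrArg (fun z : ℤ => (z : ZMod (2^(2*p) - 1))) h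
    push_cast at h2
    simp only [hχdef]
    rw [← sq]
    exact h2
  have hχ_sum : ∑ x : ZMod p, χ x = 0 := by
    have h2 : ringChar (ZMod p) ≠ 2 := by
      rw [ZMod.ringChar_zmod_n]; exact hp
    have h := quadraticChar_sum_zero h2
    calc ∑ x : ZMod p, χ x
        = ((∑ x : ZMod p, (quadraticChar (ZMod p) x : ℤ) : ℤ) : ZMod (2^(2*p) - 1)) := by
          push_cast; rfl
      _ = 0 := by rw [h]; simp
  -- rewrite G as a sum over ZMod p
  have hGr : G = ∑ x : ZMod p, χ x * ψ x := by
    rw [hG, ← Finset.add_sum_erase _ _ (Finset.mem_univ (0 : ZMod p)), hχ0, hψ0,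
      zero_mul, zero_add]
    refine Finset.sum_nbij' (fun a => (a : ZMod p)) (fun x => x.val) ?_ ?_ ?_ ?_ ?_
    · intro a ha
      simp only [Finset.mem_Ico] at ha
      simp only [Finset.mem_erase, Finset.mem_univ, and_true]
      intro h0
      rw [ZMod.natCast_eq_zero_iff] at h0
      have := Nat.le_of_dvd (by omega) h0
      omega
    · intro x hx
      simp only [Finset.mem_erase, Finset.mem_univ, and_true] at hx
      simp only [Finset.mem_Ico]
      refine ⟨?_, ZMod.val_lt x⟩
      rcases Nat.eq_zero_or_pos x.val with h | h
      · exact absurd ((ZMod.val_eq_zero x).mp h) hx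
      · exact h
    · intro a ha
      simp only [Finset.mem_Ico] at ha
      exact ZMod.val_cast_of_lt ha.2
    · intro x _
      exact ZMod.natCast_rightInverse x
    · intro a ha
      simp only [Finset.mem_Ico] at ha
      have hv : ((a : ZMod p)).val = a := ZMod.val_cast_of_lt ha.2
      simp only [hχdef, hψdef, hv]
      have e1 : ((legendreSym p (a:ℤ) : ℤ) : ZMod (2^(2*p)-1))
          = ((quadraticChar (ZMod p) ((a:ℕ):ZMod p) : ℤ) : ZMod (2^(2*p)-1)) := by
        unfold legendreSym
        norm_cast
      have e2 : (2 : ZMod (2^(2*p)-1))^(2*a) = 4^a := by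
        rw [pow_mul (2 : ZMod (2^(2*p)-1)) 2 a]; norm_num
      rw [e1, e2]
  -- sums over ZMod p as sums over range p
  have hsum_univ : ∀ f : ZMod p → ZMod (2^(2*p) - 1),
      ∑ x : ZMod p, f x = ∑ a ∈ Finset.range p, f a := by
    intro f
    refine Finset.sum_nbij' (fun x : ZMod p => x.val) (fun a : ℕ => (a : ZMod p)) ?_ ?_ ?_ ?_ ?_
    · intro x _; exact Finset.mem_range.mpr (ZMod.val_lt x)
    · intro a _; exact Finset.mem_univ _
    · intro x _; exact ZMod.natCast_rightInverse x
    · intro a ha; exact ZMod.val_cast_of_lt (Finset.mem_range.mp ha)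
    · intro x _
      rw [show ((x.val : ℕ) : ZMod p) = x from ZMod.natCast_rightInverse x]
  have hS : ∑ x : ZMod p, ψ x = (((2^(2*p) - 1) / 3 : ℕ) : ZMod (2^(2*p) - 1)) := by
    rw [hsum_univ ψ]
    have h1 : ∀ a ∈ Finset.range p, ψ (a : ZMod p) = ((4^a : ℕ) : ZMod (2^(2*p)-1)) := by
      intro a ha
      simp only [hψdef, ZMod.val_cast_of_lt (Finset.mem_range.mp ha)]
      push_cast
      ring
    rw [Finset.sum_congr rfl h1, ← Nat.cast_sum]
    congr 1
    have hg := geom_nat13 p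
    have h4 : (4:ℕ)^p = 2^(2*p) := by rw [pow_mul 2 2 p]; norm_num
    omega
  have key : ∀ x : ZMod p, ∑ y : ZMod p, (χ x * ψ x) * (χ y * ψ y)
      = ∑ z : ZMod p, χ z * ψ (x * (1 + z)) := by
    intro x
    by_cases hx : x = 0
    · subst hx
      simp only [hχ0, zero_mul, Finset.sum_const_zero, hψ0, mul_one]
      exact hχ_sum.symm
    · rw [← Equiv.sum_comp (Equiv.mulLeft₀ x hx) (fun y => (χ x * ψ x) * (χ y * ψ y))]
      refine Finset.sum_congr rfl fun z _ => ?_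
      have he : (Equiv.mulLeft₀ x hx) z = x * z := rfl
      rw [he, hχ_mul x z, mul_add x 1 z, mul_one, hψ_add x (x*z)]
      calc (χ x * ψ x) * ((χ x * χ z) * ψ (x*z))
          = (χ x * χ x) * (χ z * (ψ x * ψ (x*z))) := by ring
        _ = χ z * (ψ x * ψ (x*z)) := by rw [hχ_sq x hx, one_mul]
  have hT : ∀ z ∈ Finset.univ.erase (-1 : ZMod p),
      ∑ x : ZMod p, ψ (x * (1 + z)) = ∑ x : ZMod p, ψ x := by
    intro z hz
    have hz' : (1 : ZMod p) + z ≠ 0 := by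
      intro h
      apply (Finset.mem_erase.mp hz).1
      linear_combination h
    exact Equiv.sum_comp (Equiv.mulRight₀ ((1:ZMod p)+z) hz') ψ
  have hm : χ (-1) = ((legendreSym p (-1) : ℤ) : ZMod (2^(2*p)-1)) := by
    simp only [hχdef]
    congr 1
    show (quadraticChar (ZMod p)) (-1 : ZMod p) = legendreSym p (-1)
    unfold legendreSym
    norm_num
  calc G^2 = ∑ x : ZMod p, ∑ y : ZMod p, (χ x * ψ x) * (χ y * ψ y) := by
        rw [hGr, sq, Finset.sum_mul_sum]
    _ = ∑ x : ZMod p, ∑ z : ZMod p, χ z * ψ (x * (1 + z)) :=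
        Finset.sum_congr rfl fun x _ => key x
    _ = ∑ z : ZMod p, χ z * ∑ x : ZMod p, ψ (x * (1 + z)) := by
        rw [Finset.sum_comm]
        exact Finset.sum_congr rfl fun z _ => (Finset.mul_sum _ _ _).symm
    _ = χ (-1) * ∑ x : ZMod p, ψ (x * (1 + -1))
        + ∑ z ∈ Finset.univ.erase (-1 : ZMod p), χ z * ∑ x : ZMod p, ψ (x * (1 + z)) :=
        (Finset.add_sum_erase _ _ (Finset.mem_univ (-1 : ZMod p))).symm
    _ = χ (-1) * (p : ZMod (2^(2*p)-1))
        + (0 - χ (-1)) * (((2^(2*p)-1)/3 : ℕ) : ZMod (2^(2*p)-1)) := by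
        congr 1
        · congr 1
          calc ∑ x : ZMod p, ψ (x * (1 + -1)) = ∑ x : ZMod p, (1 : ZMod (2^(2*p)-1)) := by
                refine Finset.sum_congr rfl fun x _ => ?_
                rw [show (1 : ZMod p) + -1 = 0 by ring, mul_zero, hψ0]
            _ = (p : ZMod (2^(2*p)-1)) := by
                rw [Finset.sum_const, Finset.card_univ, ZMod.card, nsmul_eq_mul, mul_one]
        · calc ∑ z ∈ Finset.univ.erase (-1 : ZMod p), χ z * ∑ x : ZMod p, ψ (x * (1 + z))
              = ∑ z ∈ Finset.univ.erase (-1 : ZMod p), χ z * ∑ x : ZMod p, ψ x :=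
                Finset.sum_congr rfl fun z hz => by rw [hT z hz]
            _ = (∑ z ∈ Finset.univ.erase (-1 : ZMod p), χ z) * ∑ x : ZMod p, ψ x :=
                (Finset.sum_mul _ _ _).symm
            _ = (0 - χ (-1)) * (((2^(2*p)-1)/3 : ℕ) : ZMod (2^(2*p)-1)) := by
                rw [Finset.sum_erase_eq_sub (Finset.mem_univ (-1 : ZMod p)), hχ_sum, hS]
    _ = ((legendreSym p (-1) : ℤ) : ZMod (2^(2*p)-1))
        * ((p : ZMod (2^(2*p)-1)) - (((2^(2*p)-1)/3 : ℕ) : ZMod (2^(2*p)-1))) := by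
        rw [← hm]
        ring
end

section
/- Let p be an odd prime, N = 2p, and let S(2) = Σ_{i ∈ C_1} 2^i where C_1 = D_1^{(2p)} ∪ 2D_1^{(p)} ∪ {0} ⊂ ℤ/2pℤ. Then, with G_p = Σ_{a=1}^{p-1} (a/p)·4^a mod (2^N - 1), we have S(2) ≡ (1 - (2^p+1)/2) + ((2^p+1)/2)·((2^N - 1)/3) - (1/2)·((2/p)·2^p + 1)·G_p (mod 2^N - 1), where 1/2 denotes the inverse of 2 modulo 2^N - 1. -/
open scoped Classical

private lemma sum_range_even_odd {M : Type*} [AddCommMonoid M] (f : ℕ → M) (n : ℕ) :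
    ∑ i ∈ Finset.range (2*n), f i
      = ∑ k ∈ Finset.range n, f (2*k) + ∑ k ∈ Finset.range n, f (2*k+1) := by
  induction n with
  | zero => simp
  | succ n ih =>
    have h : 2*(n+1) = (2*n+1)+1 := by ring
    rw [h, Finset.sum_range_succ, Finset.sum_range_succ, ih,
      Finset.sum_range_succ, Finset.sum_range_succ]
    abel

private lemma geom_nat (n : ℕ) : 3 * (∑ j ∈ Finset.range n, 4^j) + 1 = 4^n := by
  induction n with
  | zero => simp
  | succ n ih =>
    calc 3 * (∑ j ∈ Finset.range (n+1), 4^j) + 1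
        = (3 * (∑ j ∈ Finset.range n, 4^j) + 1) + 3 * 4^n := by
          rw [Finset.sum_range_succ]; ring
      _ = 4^n + 3*4^n := by rw [ih]
      _ = 4^(n+1) := by ring

theorem stmt14 (p : ℕ) [Fact p.Prime] (hp : p ≠ 2)
    (G : ZMod (2^(2*p) - 1))
    (hG : G = ∑ a ∈ Finset.Ico 1 p, ((legendreSym p (a : ℤ) : ℤ) : ZMod (2^(2*p) - 1)) * 2^(2*a))
    (S2 : ZMod (2^(2*p) - 1))
    (hS2 : S2 = ∑ i ∈ (Finset.range (2*p)).filter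
        (fun i => i = 0 ∨ (Nat.Coprime i (2*p) ∧ ¬ IsSquare ((i : ZMod p)))
          ∨ (i % 2 = 0 ∧ i ≠ 0 ∧ ¬ IsSquare (((i / 2 : ℕ)) : ZMod p))),
        (2 : ZMod (2^(2*p) - 1)) ^ i) :
    S2 = (1 - (2 : ZMod (2^(2*p) - 1))⁻¹ * (2^p + 1))
      + (2 : ZMod (2^(2*p) - 1))⁻¹ * (2^p + 1) * (((2^(2*p) - 1) / 3 : ℕ) : ZMod (2^(2*p) - 1))
      - (2 : ZMod (2^(2*p) - 1))⁻¹
          * (((legendreSym p 2 : ℤ) : ZMod (2^(2*p) - 1)) * 2^p + 1) * G := by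
  have pp : p.Prime := Fact.out
  haveI : NeZero p := ⟨pp.ne_zero⟩
  have hodd : p % 2 = 1 := Nat.odd_iff.mp (pp.odd_of_ne_two hp)
  have hp3 : 3 ≤ p := by have := pp.two_le; omega
  have hppos : 0 < p := by omega
  have h2p1 : 1 ≤ (2:ℕ)^(2*p) := Nat.one_le_two_pow
  -- 2^(2p) = 1 in the ring
  have hpow1 : (2 : ZMod (2^(2*p)-1))^(2*p) = 1 := by
    have h : (2^(2*p) : ℕ) = (2^(2*p)-1) + 1 := by omega
    calc (2 : ZMod (2^(2*p)-1))^(2*p)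
        = ((2^(2*p) : ℕ) : ZMod (2^(2*p)-1)) := by push_cast; ring
      _ = (((2^(2*p)-1) + 1 : ℕ) : ZMod (2^(2*p)-1)) := by rw [← h]
      _ = 1 := by push_cast [ZMod.natCast_self]; ring
  have hmod : ∀ a : ℕ, (2 : ZMod (2^(2*p)-1))^a = 2^(a % (2*p)) := by
    intro a
    conv_lhs => rw [← Nat.div_add_mod a (2*p)]
    rw [pow_add, pow_mul 2 (2*p) (a/(2*p)), hpow1, one_pow, one_mul]
  -- 2 is invertible
  have hinv : (2 : ZMod (2^(2*p)-1))⁻¹ * 2 = 1 := by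
    apply ZMod.inv_mul_of_unit
    have hdvd : (2:ℕ) ∣ 2^(2*p) := dvd_pow_self 2 (by omega)
    have hnd : ¬ ((2:ℕ) ∣ (2^(2*p)-1)) := by omega
    have hc : Nat.Coprime 2 (2^(2*p)-1) := (Nat.prime_two.coprime_iff_not_dvd).mpr hnd
    have := (ZMod.isUnit_iff_coprime 2 (2^(2*p)-1)).mpr hc
    simpa using this
  -- the geometric sum
  have hX : (((2^(2*p)-1)/3 : ℕ) : ZMod (2^(2*p)-1))
      = ∑ j ∈ Finset.range p, (4 : ZMod (2^(2*p)-1))^j := by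
    have h1 : 3 * (∑ j ∈ Finset.range p, 4^j) + 1 = 4^p := geom_nat p
    have h2 : (2:ℕ)^(2*p) = 4^p := by rw [pow_mul]; norm_num
    have h4 : (2:ℕ)^(2*p) - 1 = 3 * (∑ j ∈ Finset.range p, 4^j) := by
      rw [h2, ← h1, Nat.add_sub_cancel]
    rw [h4, Nat.mul_div_cancel_left _ (by norm_num)]
    push_cast
    rfl
  -- split the sum into even and odd indices
  have hS2' : S2
      = (∑ k ∈ Finset.range p, if ((2*k) = 0
            ∨ (Nat.Coprime (2*k) (2*p) ∧ ¬ IsSquare (((2*k : ℕ)) : ZMod p))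
            ∨ ((2*k) % 2 = 0 ∧ (2*k) ≠ 0 ∧ ¬ IsSquare ((((2*k) / 2 : ℕ)) : ZMod p)))
          then (2 : ZMod (2^(2*p)-1))^(2*k) else 0)
      + (∑ k ∈ Finset.range p, if ((2*k+1) = 0
            ∨ (Nat.Coprime (2*k+1) (2*p) ∧ ¬ IsSquare (((2*k+1 : ℕ)) : ZMod p))
            ∨ ((2*k+1) % 2 = 0 ∧ (2*k+1) ≠ 0 ∧ ¬ IsSquare ((((2*k+1) / 2 : ℕ)) : ZMod p)))
          then (2 : ZMod (2^(2*p)-1))^(2*k+1) else 0) := by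
    rw [hS2, Finset.sum_filter, sum_range_even_odd]
  -- the even part
  have heven : (∑ k ∈ Finset.range p, if ((2*k) = 0
            ∨ (Nat.Coprime (2*k) (2*p) ∧ ¬ IsSquare (((2*k : ℕ)) : ZMod p))
            ∨ ((2*k) % 2 = 0 ∧ (2*k) ≠ 0 ∧ ¬ IsSquare ((((2*k) / 2 : ℕ)) : ZMod p)))
          then (2 : ZMod (2^(2*p)-1))^(2*k) else 0)
      = 1 + ∑ j ∈ Finset.Ico 1 p,
          (if ¬ IsSquare ((j : ZMod p)) then (4 : ZMod (2^(2*p)-1))^j else 0) := by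
    rw [Finset.range_eq_Ico, Finset.sum_eq_sum_Ico_succ_bot hppos]
    congr 1
    · norm_num
    · rw [show (0+1 : ℕ) = 1 from rfl]
      apply Finset.sum_congr rfl
      intro k hk
      simp only [Finset.mem_Ico] at hk
      have hk0 : 2*k ≠ 0 := by omega
      have hncop : ¬ Nat.Coprime (2*k) (2*p) := by
        intro h
        have h2 : 2 ∣ Nat.gcd (2*k) (2*p) := Nat.dvd_gcd ⟨k, rfl⟩ ⟨p, rfl⟩
        rw [Nat.Coprime] at h
        omega
      have hdiv : (2*k)/2 = k := by omega
      have hpow : (2 : ZMod (2^(2*p)-1))^(2*k) = 4^k := (pow_mul 2 2 k).trans (by norm_num)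
      rw [hdiv, hpow]
      by_cases hsq : IsSquare ((k : ZMod p))
      · simp [hk0, hncop, hsq]
      · simp [hk0, hncop, hsq]
  -- simplify the odd-part condition
  have hodd1 : ∀ k, (if ((2*k+1) = 0
            ∨ (Nat.Coprime (2*k+1) (2*p) ∧ ¬ IsSquare (((2*k+1 : ℕ)) : ZMod p))
            ∨ ((2*k+1) % 2 = 0 ∧ (2*k+1) ≠ 0 ∧ ¬ IsSquare ((((2*k+1) / 2 : ℕ)) : ZMod p)))
          then (2 : ZMod (2^(2*p)-1))^(2*k+1) else 0)
      = (if ¬ IsSquare (((2*k+1 : ℕ)) : ZMod p) then (2 : ZMod (2^(2*p)-1))^(2*k+1) else 0) := by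
    intro k
    have h1 : 2*k+1 ≠ 0 := by omega
    have h2 : ¬ ((2*k+1) % 2 = 0) := by omega
    have hc : ((2*k+1) = 0
          ∨ (Nat.Coprime (2*k+1) (2*p) ∧ ¬ IsSquare (((2*k+1 : ℕ)) : ZMod p))
          ∨ ((2*k+1) % 2 = 0 ∧ (2*k+1) ≠ 0 ∧ ¬ IsSquare ((((2*k+1) / 2 : ℕ)) : ZMod p)))
        ↔ ¬ IsSquare (((2*k+1 : ℕ)) : ZMod p) := by
      constructor
      · rintro (h | ⟨_, h⟩ | ⟨h, _⟩)
        · exact absurd h h1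
        · exact h
        · exact absurd h h2
      · intro hsq
        refine Or.inr (Or.inl ⟨?_, hsq⟩)
        rw [Nat.coprime_mul_iff_right]
        refine ⟨Nat.coprime_comm.mp ((Nat.prime_two.coprime_iff_not_dvd).mpr (by omega)), ?_⟩
        refine Nat.coprime_comm.mp ((pp.coprime_iff_not_dvd).mpr ?_)
        intro hdvd
        exact hsq (by rw [(ZMod.natCast_eq_zero_iff _ _).mpr hdvd]; exact IsSquare.zero)
    rw [if_congr hc rfl rfl]
  -- reindex the odd part
  have hreidx : (∑ k ∈ Finset.range p,
        if ¬ IsSquare (((2*k+1 : ℕ)) : ZMod p) then (2 : ZMod (2^(2*p)-1))^(2*k+1) else 0)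
      = ∑ j ∈ Finset.range p,
        (if ¬ IsSquare (((2*j : ℕ)) : ZMod p) then (2 : ZMod (2^(2*p)-1))^(2*j+p) else 0) := by
    apply Finset.sum_nbij' (i := fun k => (k + (p+1)/2) % p) (j := fun j => (j + (p-1)/2) % p)
    · intro a _
      exact Finset.mem_range.mpr (Nat.mod_lt _ hppos)
    · intro a _
      exact Finset.mem_range.mpr (Nat.mod_lt _ hppos)
    · intro a ha
      have ha' := Finset.mem_range.mp ha
      have h : a + (p+1)/2 + (p-1)/2 = a + p := by omega
      rw [Nat.mod_add_mod, h, Nat.add_mod_right, Nat.mod_eq_of_lt ha']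
    · intro a ha
      have ha' := Finset.mem_range.mp ha
      have h : a + (p-1)/2 + (p+1)/2 = a + p := by omega
      rw [Nat.mod_add_mod, h, Nat.add_mod_right, Nat.mod_eq_of_lt ha']
    · intro k _
      set m := (k + (p+1)/2) % p with hm
      have hmod1 : m ≡ k + (p+1)/2 [MOD p] := Nat.mod_modEq _ p
      have h3 : 2*(k+(p+1)/2) = (2*k+1) + p := by omega
      have hmod2 : (2*m + p) % (2*p) = (2*k+1) % (2*p) := by
        have h2 : 2*m ≡ 2*(k + (p+1)/2) [MOD 2*p] := hmod1.mul_left' 2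
        calc (2*m + p) % (2*p)
            = (2*(k+(p+1)/2) + p) % (2*p) := h2.add_right p
          _ = ((2*k+1) + 2*p) % (2*p) := by rw [h3]; ring_nf
          _ = (2*k+1) % (2*p) := Nat.add_mod_right _ _
      have hcond : (((2*m : ℕ)) : ZMod p) = (((2*k+1 : ℕ)) : ZMod p) := by
        rw [ZMod.natCast_eq_natCast_iff]
        calc 2*m ≡ 2*(k+(p+1)/2) [MOD p] := hmod1.mul_left 2
          _ = (2*k+1) + p := h3
          _ ≡ 2*k+1 [MOD p] := Nat.add_mod_right _ _
      have hpow : (2 : ZMod (2^(2*p)-1))^(2*k+1) = (2 : ZMod (2^(2*p)-1))^(2*m+p) := by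
        rw [hmod (2*k+1), hmod (2*m+p), hmod2]
      rw [← hcond, hpow]
  -- drop the j = 0 term and rewrite the power
  have hdrop : (∑ j ∈ Finset.range p,
        if ¬ IsSquare (((2*j : ℕ)) : ZMod p) then (2 : ZMod (2^(2*p)-1))^(2*j+p) else 0)
      = ∑ j ∈ Finset.Ico 1 p,
        (if ¬ IsSquare (((2*j : ℕ)) : ZMod p)
          then (4 : ZMod (2^(2*p)-1))^j * 2^p else 0) := by
    rw [Finset.range_eq_Ico, Finset.sum_eq_sum_Ico_succ_bot hppos]
    have h0 : IsSquare (((2*0 : ℕ)) : ZMod p) := by norm_num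
    rw [if_neg (by simpa using h0)]
    rw [zero_add, show (0+1 : ℕ) = 1 from rfl]
    apply Finset.sum_congr rfl
    intro j _
    have : (2 : ZMod (2^(2*p)-1))^(2*j+p) = 4^j * 2^p := by
      rw [pow_add, pow_mul 2 2 j]; norm_num
    rw [this]
  -- the odd part, combined
  have hO : (∑ k ∈ Finset.range p, if ((2*k+1) = 0
            ∨ (Nat.Coprime (2*k+1) (2*p) ∧ ¬ IsSquare (((2*k+1 : ℕ)) : ZMod p))
            ∨ ((2*k+1) % 2 = 0 ∧ (2*k+1) ≠ 0 ∧ ¬ IsSquare ((((2*k+1) / 2 : ℕ)) : ZMod p)))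
          then (2 : ZMod (2^(2*p)-1))^(2*k+1) else 0)
      = ∑ j ∈ Finset.Ico 1 p,
        (if ¬ IsSquare (((2*j : ℕ)) : ZMod p)
          then (4 : ZMod (2^(2*p)-1))^j * 2^p else 0) := by
    rw [Finset.sum_congr rfl (fun k _ => hodd1 k), hreidx, hdrop]
  -- per-term Legendre identity
  have hterm : ∀ j ∈ Finset.Ico 1 p,
      ((if ¬ IsSquare ((j : ZMod p)) then (4 : ZMod (2^(2*p)-1))^j else 0)
        + (if ¬ IsSquare (((2*j : ℕ)) : ZMod p)
            then (4 : ZMod (2^(2*p)-1))^j * 2^p else 0))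
      = ((2 : ZMod (2^(2*p)-1))⁻¹ * (2^p+1)) * 4^j
        - ((2 : ZMod (2^(2*p)-1))⁻¹
            * (((legendreSym p 2 : ℤ) : ZMod (2^(2*p)-1)) * 2^p + 1))
          * (((legendreSym p (j : ℤ) : ℤ) : ZMod (2^(2*p)-1)) * 4^j) := by
    intro j hj
    simp only [Finset.mem_Ico] at hj
    have hj0 : ((j : ℕ) : ZMod p) ≠ 0 := by
      rw [Ne, ZMod.natCast_eq_zero_iff]
      intro hdvd
      exact absurd (Nat.le_of_dvd (by omega) hdvd) (by omega)
    have h2ne : ((2 : ℕ) : ZMod p) ≠ 0 := by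
      rw [Ne, ZMod.natCast_eq_zero_iff]
      intro hdvd
      exact absurd (Nat.le_of_dvd (by omega) hdvd) (by omega)
    have h2j0 : ((2*j : ℕ) : ZMod p) ≠ 0 := by
      push_cast
      push_cast at h2ne
      exact mul_ne_zero h2ne hj0
    have hmul : legendreSym p ((2*j : ℕ) : ℤ) = legendreSym p 2 * legendreSym p (j : ℤ) := by
      have : ((2*j : ℕ) : ℤ) = 2 * (j : ℤ) := by push_cast; ring
      rw [this]
      exact legendreSym.mul p 2 (j : ℤ)
    by_cases hsj : IsSquare ((j : ZMod p)) <;> by_cases hs2j : IsSquare (((2*j : ℕ)) : ZMod p)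
    · have hcj : legendreSym p (j : ℤ) = 1 := (legendreSym.eq_one_iff' p hj0).mpr hsj
      have hc2j : legendreSym p ((2*j : ℕ) : ℤ) = 1 := (legendreSym.eq_one_iff' p h2j0).mpr hs2j
      have hc2 : legendreSym p 2 = 1 := by
        rw [hcj, mul_one] at hmul; rw [← hmul, hc2j]
      rw [hcj, hc2, if_neg (not_not_intro hsj), if_neg (not_not_intro hs2j)]
      push_cast
      ring
    · have hcj : legendreSym p (j : ℤ) = 1 := (legendreSym.eq_one_iff' p hj0).mpr hsj
      have hc2j : legendreSym p ((2*j : ℕ) : ℤ) = -1 := (legendreSym.eq_neg_one_iff' p).mpr hs2j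
      have hc2 : legendreSym p 2 = -1 := by
        rw [hcj, mul_one] at hmul; rw [← hmul, hc2j]
      rw [hcj, hc2, if_neg (not_not_intro hsj), if_pos hs2j]
      push_cast
      linear_combination (-((2 : ZMod (2^(2*p)-1))^p * 4^j)) * hinv
    · have hcj : legendreSym p (j : ℤ) = -1 := (legendreSym.eq_neg_one_iff' p).mpr hsj
      have hc2j : legendreSym p ((2*j : ℕ) : ℤ) = 1 := (legendreSym.eq_one_iff' p h2j0).mpr hs2j
      have hc2 : legendreSym p 2 = -1 := by
        rw [hcj] at hmul
        have : legendreSym p ((2*j : ℕ) : ℤ) = -legendreSym p 2 := by rw [hmul]; ring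
        rw [hc2j] at this; linarith
      rw [hcj, hc2, if_pos hsj, if_neg (not_not_intro hs2j)]
      push_cast
      linear_combination (-((4 : ZMod (2^(2*p)-1))^j)) * hinv
    · have hcj : legendreSym p (j : ℤ) = -1 := (legendreSym.eq_neg_one_iff' p).mpr hsj
      have hc2j : legendreSym p ((2*j : ℕ) : ℤ) = -1 := (legendreSym.eq_neg_one_iff' p).mpr hs2j
      have hc2 : legendreSym p 2 = 1 := by
        rw [hcj] at hmul
        have : legendreSym p ((2*j : ℕ) : ℤ) = -legendreSym p 2 := by rw [hmul]; ring
        rw [hc2j] at this; linarith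
      rw [hcj, hc2, if_pos hsj, if_pos hs2j]
      push_cast
      linear_combination (-(((2 : ZMod (2^(2*p)-1))^p + 1) * 4^j)) * hinv
  -- rewrite G
  have hG4 : G = ∑ a ∈ Finset.Ico 1 p,
      ((legendreSym p (a : ℤ) : ℤ) : ZMod (2^(2*p)-1)) * 4^a := by
    rw [hG]
    apply Finset.sum_congr rfl
    intro a _
    have : (2 : ZMod (2^(2*p)-1))^(2*a) = 4^a := (pow_mul 2 2 a).trans (by norm_num)
    rw [this]
  -- assemble
  rw [hS2', heven, hO, hG4, hX, Finset.range_eq_Ico, Finset.sum_eq_sum_Ico_succ_bot hppos,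
    show (0+1 : ℕ) = 1 from rfl]
  have hcomb : (∑ j ∈ Finset.Ico 1 p,
        (if ¬ IsSquare ((j : ZMod p)) then (4 : ZMod (2^(2*p)-1))^j else 0))
      + (∑ j ∈ Finset.Ico 1 p,
        (if ¬ IsSquare (((2*j : ℕ)) : ZMod p)
          then (4 : ZMod (2^(2*p)-1))^j * 2^p else 0))
      = ((2 : ZMod (2^(2*p)-1))⁻¹ * (2^p+1)) * (∑ j ∈ Finset.Ico 1 p, (4 : ZMod (2^(2*p)-1))^j)
        - ((2 : ZMod (2^(2*p)-1))⁻¹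
            * (((legendreSym p 2 : ℤ) : ZMod (2^(2*p)-1)) * 2^p + 1))
          * (∑ j ∈ Finset.Ico 1 p,
              ((legendreSym p (j : ℤ) : ℤ) : ZMod (2^(2*p)-1)) * 4^j) := by
    rw [← Finset.sum_add_distrib, Finset.mul_sum, Finset.mul_sum, ← Finset.sum_sub_distrib]
    exact Finset.sum_congr rfl hterm
  linear_combination hcomb
end

section
/- Let p be an odd prime and let S(2) = Σ_{i ∈ C_1} 2^i where C_1 = D_1^{(2p)} ∪ 2D_1^{(p)} ∪ {0} is the support in ℤ/2pℤ of the generalized cyclotomic sequence of order 2 and period 2p. Then gcd(S(2), 2^p + 1) = 1. -/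
open scoped Classical

open Finset in
lemma aux_cast_sum (p ℓ : ℕ) [Fact p.Prime] [NeZero ℓ] (hp : p ≠ 2)
    (h2 : (2 : ZMod ℓ) ^ p = -1) :
    ((∑ i ∈ (Finset.range (2*p)).filter
        (fun i => i = 0 ∨ (Nat.Coprime i (2*p) ∧ ¬ IsSquare ((i : ZMod p)))
          ∨ (i % 2 = 0 ∧ i ≠ 0 ∧ ¬ IsSquare (((i / 2 : ℕ)) : ZMod p))), 2 ^ i : ℕ) : ZMod ℓ)
    = 1 + (∑ x ∈ Finset.univ.filter (fun x : ZMod p => ¬ IsSquare x), (4 : ZMod ℓ) ^ x.val)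
      - ∑ x ∈ Finset.univ.filter (fun x : ZMod p => ¬ IsSquare x), (-2 : ZMod ℓ) ^ x.val := by
  have pp := (Fact.out : p.Prime)
  have hp1 : 1 < p := pp.one_lt
  have hpodd : p % 2 = 1 := Nat.odd_iff.mp (pp.odd_of_ne_two hp)
  push_cast
  set NS := Finset.univ.filter (fun x : ZMod p => ¬ IsSquare x) with hNS
  have hvlt : ∀ x : ZMod p, x.val < p := fun x => ZMod.val_lt x
  have hvne : ∀ x ∈ NS, x.val ≠ 0 := by
    intro x hx
    simp only [hNS, mem_filter] at hx
    intro h0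
    exact hx.2 (by rw [(ZMod.val_eq_zero x).mp h0]; exact ⟨0, (mul_zero 0).symm⟩)
  -- split the filter
  have hsplit : (Finset.range (2*p)).filter
        (fun i => i = 0 ∨ (Nat.Coprime i (2*p) ∧ ¬ IsSquare ((i : ZMod p)))
          ∨ (i % 2 = 0 ∧ i ≠ 0 ∧ ¬ IsSquare (((i / 2 : ℕ)) : ZMod p)))
      = ({0} ∪ (Finset.range (2*p)).filter
            (fun i => Nat.Coprime i (2*p) ∧ ¬ IsSquare ((i : ZMod p))))
        ∪ (Finset.range (2*p)).filter
            (fun i => i % 2 = 0 ∧ i ≠ 0 ∧ ¬ IsSquare (((i / 2 : ℕ)) : ZMod p)) := by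
    ext i
    simp only [mem_filter, mem_union, mem_singleton, mem_range]
    constructor
    · rintro ⟨hi, h | h | h⟩
      · exact Or.inl (Or.inl h)
      · exact Or.inl (Or.inr ⟨hi, h⟩)
      · exact Or.inr ⟨hi, h⟩
    · rintro ((h | ⟨hi, h⟩) | ⟨hi, h⟩)
      · subst h; exact ⟨by omega, Or.inl rfl⟩
      · exact ⟨hi, Or.inr (Or.inl h)⟩
      · exact ⟨hi, Or.inr (Or.inr h)⟩
  have hoddcop : ∀ i : ℕ, Nat.Coprime i (2*p) → i % 2 = 1 ∧ ¬ p ∣ i := by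
    intro i hc
    rw [Nat.coprime_mul_iff_right] at hc
    constructor
    · rcases Nat.even_or_odd i with he | ho
      · exfalso
        have h2i : (2:ℕ) ∣ i := he.two_dvd
        have := Nat.dvd_gcd h2i (dvd_refl 2)
        rw [Nat.Coprime.gcd_eq_one hc.1] at this
        omega
      · exact Nat.odd_iff.mp ho
    · intro hdvd
      have := Nat.dvd_gcd hdvd (dvd_refl p)
      rw [Nat.Coprime.gcd_eq_one hc.2] at this
      exact pp.one_lt.ne' (Nat.dvd_one.mp this)
  rw [hsplit, Finset.sum_union, Finset.sum_union]
  · -- now the three sums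
    have hsum0 : ∑ i ∈ ({0} : Finset ℕ), (2:ZMod ℓ)^i = 1 := by simp
    have hEven : ∑ i ∈ (Finset.range (2*p)).filter
          (fun i => i % 2 = 0 ∧ i ≠ 0 ∧ ¬ IsSquare (((i / 2 : ℕ)) : ZMod p)), (2:ZMod ℓ)^i
        = ∑ x ∈ NS, (4:ZMod ℓ)^x.val := by
      refine Finset.sum_bij' (fun i _ => ((i/2 : ℕ) : ZMod p)) (fun x _ => 2 * x.val)
        ?_ ?_ ?_ ?_ ?_
      · intro i hi
        simp only [mem_filter, mem_range] at hi
        simp only [hNS, mem_filter, mem_univ, true_and]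
        exact hi.2.2.2
      · intro x hx
        have hv := hvlt x
        have hv0 := hvne x hx
        simp only [hNS, mem_filter, mem_univ, true_and] at hx
        simp only [mem_filter, mem_range]
        refine ⟨by omega, by omega, by omega, ?_⟩
        rw [Nat.mul_div_cancel_left _ (by norm_num : 0 < 2)]
        rwa [ZMod.natCast_rightInverse x]
      · intro i hi
        simp only [mem_filter, mem_range] at hi
        show 2 * (((i / 2 : ℕ) : ZMod p)).val = i
        rw [ZMod.val_cast_of_lt (by omega : i / 2 < p)]
        omega
      · intro x hx
        show ((2 * x.val / 2 : ℕ) : ZMod p) = x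
        rw [Nat.mul_div_cancel_left _ (by norm_num : 0 < 2)]
        exact ZMod.natCast_rightInverse x
      · intro i hi
        simp only [mem_filter, mem_range] at hi
        show (2 : ZMod ℓ) ^ i = (4 : ZMod ℓ) ^ (((i / 2 : ℕ) : ZMod p)).val
        rw [ZMod.val_cast_of_lt (by omega : i / 2 < p)]
        have : (4:ZMod ℓ) = 2^2 := by norm_num
        rw [this, ← pow_mul]
        congr 1
        omega
    have hOdd : ∑ i ∈ (Finset.range (2*p)).filter
          (fun i => Nat.Coprime i (2*p) ∧ ¬ IsSquare ((i : ZMod p))), (2:ZMod ℓ)^i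
        = ∑ x ∈ NS, -((-2:ZMod ℓ)^x.val) := by
      refine Finset.sum_bij' (fun i _ => ((i : ℕ) : ZMod p))
        (fun x _ => if x.val % 2 = 1 then x.val else x.val + p) ?_ ?_ ?_ ?_ ?_
      · intro i hi
        simp only [mem_filter, mem_range] at hi
        simp only [hNS, mem_filter, mem_univ, true_and]
        exact hi.2.2
      · intro x hx
        have hv := hvlt x
        have hv0 := hvne x hx
        simp only [hNS, mem_filter, mem_univ, true_and] at hx
        simp only [mem_filter, mem_range]
        by_cases hpar : x.val % 2 = 1
        · rw [if_pos hpar]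
          refine ⟨by omega, ?_, by rwa [ZMod.natCast_rightInverse x]⟩
          rw [Nat.coprime_mul_iff_right]
          constructor
          · exact Nat.coprime_comm.mp ((Nat.prime_two.coprime_iff_not_dvd).mpr (by omega))
          · refine Nat.coprime_comm.mp ((pp.coprime_iff_not_dvd).mpr ?_)
            intro hdvd
            have := Nat.eq_zero_of_dvd_of_lt hdvd hv
            omega
        · rw [if_neg hpar]
          refine ⟨by omega, ?_, ?_⟩
          · rw [Nat.coprime_mul_iff_right]
            constructor
            · exact Nat.coprime_comm.mp ((Nat.prime_two.coprime_iff_not_dvd).mpr (by omega))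
            · refine Nat.coprime_comm.mp ((pp.coprime_iff_not_dvd).mpr ?_)
              intro hdvd
              have hdvd' : p ∣ x.val := (Nat.dvd_add_iff_left (dvd_refl p)).mpr hdvd
              have := Nat.eq_zero_of_dvd_of_lt hdvd' hv
              omega
          · push_cast
            rw [ZMod.natCast_self, add_zero]
            rwa [ZMod.natCast_rightInverse x]
      · intro i hi
        simp only [mem_filter, mem_range] at hi
        have hio := hoddcop i hi.2.1
        have hval : ((i : ZMod p)).val = i % p := ZMod.val_natCast p i
        show (if ((i : ZMod p)).val % 2 = 1 then ((i : ZMod p)).val else ((i : ZMod p)).val + p) = i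
        by_cases hip : i < p
        · have h1 : i % p = i := Nat.mod_eq_of_lt hip
          rw [hval, h1, if_pos (by omega)]
        · have h1 : i % p = i - p := by
            rw [Nat.mod_eq_sub_mod (by omega), Nat.mod_eq_of_lt (by omega)]
          rw [hval, h1, if_neg (by omega)]
          omega
      · intro x hx
        have hv := hvlt x
        show (((if x.val % 2 = 1 then x.val else x.val + p : ℕ)) : ZMod p) = x
        by_cases hpar : x.val % 2 = 1
        · rw [if_pos hpar]; exact ZMod.natCast_rightInverse x
        · rw [if_neg hpar]; push_cast
          rw [ZMod.natCast_self, add_zero]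
          exact ZMod.natCast_rightInverse x
      · intro i hi
        simp only [mem_filter, mem_range] at hi
        have hio := hoddcop i hi.2.1
        have hval : ((i : ZMod p)).val = i % p := ZMod.val_natCast p i
        show (2 : ZMod ℓ) ^ i = -((-2 : ZMod ℓ) ^ ((i : ZMod p)).val)
        by_cases hip : i < p
        · have hvv : ((i : ZMod p)).val = i := by rw [hval, Nat.mod_eq_of_lt hip]
          rw [hvv, Odd.neg_pow (Nat.odd_iff.mpr hio.1), neg_neg]
        · have hvv : ((i : ZMod p)).val = i - p := by
            rw [hval, Nat.mod_eq_sub_mod (by omega), Nat.mod_eq_of_lt (by omega)]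
          have h2i : (2 : ZMod ℓ) ^ i = 2 ^ (i - p) * 2 ^ p := by
            rw [← pow_add]; congr 1; omega
          rw [hvv, h2i, h2, Even.neg_pow (by rw [Nat.even_iff]; omega)]
          ring
    rw [hsum0, hEven, hOdd, Finset.sum_neg_distrib]
    ring
  · -- Disjoint {0} (filter P2)
    rw [Finset.disjoint_left]
    intro a ha hb
    rw [Finset.mem_singleton] at ha
    subst ha
    have hc := (Finset.mem_filter.mp hb).2.1
    have h1 := hoddcop 0 hc
    omega
  · -- Disjoint ({0} ∪ filter P2) (filter P3)
    rw [Finset.disjoint_left]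
    intro a ha hb
    have hb' := Finset.mem_filter.mp hb
    rcases Finset.mem_union.mp ha with h0 | hcp
    · rw [Finset.mem_singleton] at h0
      exact hb'.2.2.1 h0
    · have hc := (Finset.mem_filter.mp hcp).2.1
      have h1 := hoddcop a hc
      have h2 := hb'.2.1
      omega

open Finset in
theorem stmt15 (p : ℕ) [Fact p.Prime] (hp : p ≠ 2)
    (S2 : ℕ)
    (hS2 : S2 = ∑ i ∈ (Finset.range (2*p)).filter
        (fun i => i = 0 ∨ (Nat.Coprime i (2*p) ∧ ¬ IsSquare ((i : ZMod p)))
          ∨ (i % 2 = 0 ∧ i ≠ 0 ∧ ¬ IsSquare (((i / 2 : ℕ)) : ZMod p))), 2 ^ i) :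
    Nat.gcd S2 (2^p + 1) = 1 := by
  by_contra hg
  have pp := (Fact.out : p.Prime)
  have hp1 : 1 < p := pp.one_lt
  have hpodd : p % 2 = 1 := Nat.odd_iff.mp (pp.odd_of_ne_two hp)
  have hp3 : 3 ≤ p := by omega
  set ℓ := Nat.minFac (Nat.gcd S2 (2^p + 1)) with hℓdef
  have hℓp : ℓ.Prime := Nat.minFac_prime hg
  haveI : Fact ℓ.Prime := ⟨hℓp⟩
  have hℓS : ℓ ∣ S2 := (Nat.minFac_dvd _).trans (Nat.gcd_dvd_left _ _)
  have hℓq : ℓ ∣ 2^p + 1 := (Nat.minFac_dvd _).trans (Nat.gcd_dvd_right _ _)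
  have hℓ2 : ℓ ≠ 2 := by
    intro h
    have h1 : (2:ℕ) ∣ 2^p := dvd_pow_self 2 (by omega)
    have h2 : (2:ℕ) ∣ 2^p + 1 := h ▸ hℓq
    omega
  have hℓ1 : 1 < ℓ := hℓp.one_lt
  have hq2 : (2 : ZMod ℓ) ^ p = -1 := by
    have h0 : ((2^p + 1 : ℕ) : ZMod ℓ) = 0 := by
      rw [ZMod.natCast_eq_zero_iff]; exact hℓq
    push_cast at h0
    exact eq_neg_of_add_eq_zero_left h0
  have h20 : (2 : ZMod ℓ) ≠ 0 := by
    intro h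
    have : ((2:ℕ) : ZMod ℓ) = 0 := by push_cast; exact h
    rw [ZMod.natCast_eq_zero_iff] at this
    exact hℓ2 ((Nat.prime_dvd_prime_iff_eq hℓp Nat.prime_two).mp this)
  have hneg1 : (-1 : ZMod ℓ) ≠ 1 := by
    intro h
    apply h20
    linear_combination -h
  have hS0 : ((S2 : ℕ) : ZMod ℓ) = 0 := by
    rw [ZMod.natCast_eq_zero_iff]; exact hℓS
  have hkey := aux_cast_sum p ℓ hp hq2
  rw [← hS2, hS0] at hkey
  -- notation
  set NS := Finset.univ.filter (fun x : ZMod p => ¬ IsSquare x) with hNS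
  set SQ := Finset.univ.filter (fun x : ZMod p => IsSquare x ∧ x ≠ 0) with hSQ
  have hx0 : ∀ x ∈ NS, x ≠ (0 : ZMod p) := by
    intro x hx h0
    rw [hNS, mem_filter] at hx
    exact hx.2 (by rw [h0]; exact ⟨0, (mul_zero 0).symm⟩)
  -- the multiplier m
  set m : ZMod p := (((p+1)/2 : ℕ) : ZMod p) with hm
  have hmval : m.val = (p+1)/2 := ZMod.val_cast_of_lt (by omega)
  have hm0 : m ≠ 0 := by
    intro h
    have := (ZMod.val_eq_zero m).mpr h
    omega
  have h4p : (4 : ZMod ℓ) ^ p = 1 := by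
    have h4 : (4 : ZMod ℓ) = 2^2 := by norm_num
    rw [h4, ← pow_mul, mul_comm, pow_mul, hq2]
    ring
  have hmx : ∀ x : ZMod p, (4 : ZMod ℓ) ^ ((m*x).val) = (-2 : ZMod ℓ) ^ x.val := by
    intro x
    rw [ZMod.val_mul, ← pow_eq_pow_mod _ h4p, hmval, pow_mul]
    congr 1
    have h4 : (4 : ZMod ℓ) = 2^2 := by norm_num
    rw [h4, ← pow_mul]
    have : 2 * ((p+1)/2) = p + 1 := by omega
    rw [this, pow_succ, hq2]
    ring
  have hinj : Set.InjOn (fun x : ZMod p => m * x) NS := by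
    intro a _ b _ hab
    exact mul_left_cancel₀ hm0 hab
  have hsum_eq : ∑ x ∈ NS, (-2 : ZMod ℓ)^x.val
      = ∑ y ∈ NS.image (fun x => m * x), (4 : ZMod ℓ)^y.val := by
    rw [Finset.sum_image (fun a ha b hb h => hinj ha hb h)]
    exact Finset.sum_congr rfl (fun x _ => (hmx x).symm)
  by_cases hms : IsSquare m
  · -- m is a square: image of NS is NS, sum cancels
    have himg : NS.image (fun x => m * x) = NS := by
      ext y
      simp only [Finset.mem_image, hNS, Finset.mem_filter, Finset.mem_univ, true_and]
      constructor
      · rintro ⟨x, hx, rfl⟩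
        intro hsq
        apply hx
        have hxe : x = m⁻¹ * (m * x) := (inv_mul_cancel_left₀ hm0 x).symm
        rw [hxe]
        obtain ⟨r, hr⟩ := hms
        exact IsSquare.mul ⟨r⁻¹, by rw [hr]; rw [mul_inv]⟩ hsq
      · intro hy
        refine ⟨m⁻¹ * y, ?_, mul_inv_cancel_left₀ hm0 y⟩
        intro hsq
        apply hy
        have : y = m * (m⁻¹ * y) := (mul_inv_cancel_left₀ hm0 y).symm
        rw [this]
        exact hms.mul hsq
    rw [hsum_eq, himg] at hkey
    exact one_ne_zero (by linear_combination -hkey : (1 : ZMod ℓ) = 0)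
  · by_cases h41 : (4 : ZMod ℓ) = 1
    · -- 4 = 1 in ZMod ℓ: both sums become cardinalities, equal
      rw [hsum_eq] at hkey
      have hc : (NS.image (fun x => m * x)).card = NS.card :=
        Finset.card_image_of_injOn hinj
      simp only [h41, one_pow, Finset.sum_const, nsmul_eq_mul, mul_one, hc] at hkey
      exact one_ne_zero (by linear_combination -hkey : (1 : ZMod ℓ) = 0)
    · -- Gauss sum case
      haveI : Fact (1 < p) := ⟨hp1⟩
      have hχm : quadraticChar (ZMod p) m = -1 :=
        quadraticChar_neg_one_iff_not_isSquare.mpr hms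
      have himg : NS.image (fun x => m * x) = SQ := by
        ext y
        simp only [Finset.mem_image, hNS, hSQ, Finset.mem_filter, Finset.mem_univ, true_and]
        constructor
        · rintro ⟨x, hx, rfl⟩
          have hx0' : x ≠ 0 := fun h => hx (by rw [h]; exact ⟨0, (mul_zero 0).symm⟩)
          have hmx0 : m * x ≠ 0 := mul_ne_zero hm0 hx0'
          have hχx : quadraticChar (ZMod p) x = -1 :=
            quadraticChar_neg_one_iff_not_isSquare.mpr hx
          have h1 : quadraticChar (ZMod p) (m * x) = 1 := by
            rw [map_mul, hχm, hχx]; ring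
          exact ⟨(quadraticChar_one_iff_isSquare hmx0).mp h1, hmx0⟩
        · rintro ⟨hsq, hy0⟩
          refine ⟨m⁻¹ * y, ?_, mul_inv_cancel_left₀ hm0 y⟩
          rw [← quadraticChar_neg_one_iff_not_isSquare]
          have hinv : quadraticChar (ZMod p) m⁻¹ = -1 := by
            have h1 : quadraticChar (ZMod p) (m * m⁻¹) = 1 := by
              rw [mul_inv_cancel₀ hm0]; exact map_one _
            rw [map_mul, hχm] at h1
            linarith
          rw [map_mul, hinv, (quadraticChar_one_iff_isSquare hy0).mpr hsq]
          ring
      rw [hsum_eq, himg] at hkey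
      -- the additive character
      set ψ : AddChar (ZMod p) (ZMod ℓ) := AddChar.zmodChar p h4p with hψdef
      have hψapp : ∀ x : ZMod p, ψ x = (4 : ZMod ℓ) ^ x.val := fun x =>
        AddChar.zmodChar_apply h4p x
      have hψ1 : ψ 1 = 4 := by rw [hψapp, ZMod.val_one p, pow_one]
      have hψ0 : ψ ≠ 0 := AddChar.ne_zero_iff.mpr ⟨1, by rw [hψ1]; exact h41⟩
      have hψprim : ψ.IsPrimitive := by
        apply AddChar.zmod_char_primitive_of_eq_one_only_at_zero
        intro a ha
        rw [hψapp] at ha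
        have hdvd : orderOf (4 : ZMod ℓ) ∣ p := orderOf_dvd_of_pow_eq_one h4p
        rcases (Nat.dvd_prime pp).mp hdvd with h1 | hop
        · exact absurd (orderOf_eq_one_iff.mp h1) h41
        · have hav : orderOf (4 : ZMod ℓ) ∣ a.val := orderOf_dvd_of_pow_eq_one ha
          rw [hop] at hav
          exact (ZMod.val_eq_zero a).mp (Nat.eq_zero_of_dvd_of_lt hav (ZMod.val_lt a))
      have hψsum : ∑ x : ZMod p, ψ x = 0 := by
        have h := AddChar.sum_eq_ite ψ
        rw [if_neg hψ0] at h
        exact h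
      -- the multiplicative character
      set χ : MulChar (ZMod p) (ZMod ℓ) :=
        (quadraticChar (ZMod p)).ringHomComp (Int.castRingHom (ZMod ℓ)) with hχdef
      have hχapp : ∀ x : ZMod p, χ x = ((quadraticChar (ZMod p) x : ℤ) : ZMod ℓ) :=
        fun x => MulChar.ringHomComp_apply _ _ x
      have hχ1 : χ ≠ 1 := by
        obtain ⟨b, hb⟩ := FiniteField.exists_nonsquare
          (by rw [ZMod.ringChar_zmod_n]; exact hp : ringChar (ZMod p) ≠ 2)
        intro h
        have hb0 : b ≠ 0 := fun h0 => hb (by rw [h0]; exact ⟨0, (mul_zero 0).symm⟩)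
        have h1 : χ b = 1 := by rw [h]; exact MulChar.one_apply (Ne.isUnit hb0)
        have h2 : χ b = -1 := by
          rw [hχapp, quadraticChar_neg_one_iff_not_isSquare.mpr hb]
          push_cast; ring
        rw [h1] at h2
        exact hneg1 h2.symm
      -- partition of the universe
      have huniv : (Finset.univ : Finset (ZMod p)) = ({0} ∪ SQ) ∪ NS := by
        ext x
        simp only [Finset.mem_univ, true_iff, Finset.mem_union, Finset.mem_singleton,
          hSQ, hNS, Finset.mem_filter, Finset.mem_univ, true_and]
        by_cases hs : IsSquare x
        · by_cases h0 : x = 0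
          · tauto
          · tauto
        · tauto
      have hd1 : Disjoint ({0} : Finset (ZMod p)) SQ := by
        rw [Finset.disjoint_left]
        intro a ha hb
        rw [Finset.mem_singleton] at ha
        rw [hSQ, Finset.mem_filter] at hb
        exact hb.2.2 ha
      have hd2 : Disjoint (({0} : Finset (ZMod p)) ∪ SQ) NS := by
        rw [Finset.disjoint_left]
        intro a ha hb
        rw [hNS, Finset.mem_filter] at hb
        rcases Finset.mem_union.mp ha with h0 | hsq
        · rw [Finset.mem_singleton] at h0
          exact hb.2 (by rw [h0]; exact ⟨0, (mul_zero 0).symm⟩)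
        · rw [hSQ, Finset.mem_filter] at hsq
          exact hb.2 hsq.2.1
      have hpart : ∀ f : ZMod p → ZMod ℓ,
          ∑ x : ZMod p, f x = f 0 + ∑ x ∈ SQ, f x + ∑ x ∈ NS, f x := by
        intro f
        calc ∑ x : ZMod p, f x = ∑ x ∈ ({0} ∪ SQ) ∪ NS, f x := by rw [← huniv]
        _ = f 0 + ∑ x ∈ SQ, f x + ∑ x ∈ NS, f x := by
            rw [Finset.sum_union hd2, Finset.sum_union hd1, Finset.sum_singleton]
      set G := gaussSum χ ψ with hGdef
      have hA : (0 : ZMod ℓ) = 1 + ∑ x ∈ SQ, ψ x + ∑ x ∈ NS, ψ x := by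
        have h := hpart ψ
        rw [hψsum, AddChar.map_zero_eq_one] at h
        exact h
      have hGdec : G = ∑ x ∈ SQ, ψ x - ∑ x ∈ NS, ψ x := by
        have h := hpart (fun x => χ x * ψ x)
        have hχ0 : χ 0 * ψ 0 = 0 := by
          rw [hχapp, quadraticChar_zero]
          push_cast; ring
        have hsq : ∑ x ∈ SQ, χ x * ψ x = ∑ x ∈ SQ, ψ x :=
          Finset.sum_congr rfl (fun x hx => by
            rw [hSQ, Finset.mem_filter] at hx
            rw [hχapp, (quadraticChar_one_iff_isSquare hx.2.2).mpr hx.2.1]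
            push_cast; ring)
        have hns : ∑ x ∈ NS, χ x * ψ x = -∑ x ∈ NS, ψ x := by
          rw [← Finset.sum_neg_distrib]
          refine Finset.sum_congr rfl (fun x hx => ?_)
          rw [hNS, Finset.mem_filter] at hx
          rw [hχapp, quadraticChar_neg_one_iff_not_isSquare.mpr hx.2]
          push_cast; ring
        rw [hGdef, gaussSum, h, hχ0, hsq, hns]
        ring
      have hkey' : (0 : ZMod ℓ) = 1 + ∑ x ∈ NS, ψ x - ∑ y ∈ SQ, ψ y := by
        have e1 : ∑ x ∈ NS, ψ x = ∑ x ∈ NS, (4 : ZMod ℓ)^x.val :=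
          Finset.sum_congr rfl (fun x _ => hψapp x)
        have e2 : ∑ y ∈ SQ, ψ y = ∑ y ∈ SQ, (4 : ZMod ℓ)^y.val :=
          Finset.sum_congr rfl (fun y _ => hψapp y)
        rw [e1, e2]
        exact hkey
      have hG1 : G = 1 := by linear_combination hGdec + hkey'
      have hsqG := gaussSum_sq hχ1
        ((quadraticChar_isQuadratic (ZMod p)).comp (Int.castRingHom (ZMod ℓ))) hψprim
      rw [← hGdef, hG1, one_pow, ZMod.card] at hsqG
      -- hsqG : 1 = χ (-1) * p
      have hqv := (quadraticChar_isQuadratic (ZMod p)) (-1)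
      have hbound : ℓ ≤ p + 1 := by
        rcases hqv with h0 | h1 | hm1
        · exfalso
          rw [quadraticChar_eq_zero_iff] at h0
          have : (1 : ZMod p) = 0 := by linear_combination -h0
          exact one_ne_zero this
        · have hp' : ((p : ℕ) : ZMod ℓ) = 1 := by
            rw [hχapp, h1] at hsqG
            push_cast at hsqG
            linear_combination -hsqG
          have hdvd : ℓ ∣ p - 1 := by
            have hc : ((p - 1 : ℕ) : ZMod ℓ) = 0 := by
              push_cast [Nat.cast_sub (by omega : 1 ≤ p)]
              rw [hp']; ring
            exact (ZMod.natCast_eq_zero_iff _ _).mp hc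
          have := Nat.le_of_dvd (by omega) hdvd
          omega
        · have hp' : ((p : ℕ) : ZMod ℓ) = -1 := by
            rw [hχapp, hm1] at hsqG
            push_cast at hsqG
            linear_combination hsqG
          have hdvd : ℓ ∣ p + 1 := by
            have hc : ((p + 1 : ℕ) : ZMod ℓ) = 0 := by
              push_cast
              rw [hp']; ring
            exact (ZMod.natCast_eq_zero_iff _ _).mp hc
          exact Nat.le_of_dvd (by omega) hdvd
      -- order of 2 mod ℓ is 2p
      have h2p2 : (2 : ZMod ℓ) ^ (2*p) = 1 := by
        rw [mul_comm, pow_mul, hq2]; ring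
      have hd2p : orderOf (2 : ZMod ℓ) ∣ 2*p := orderOf_dvd_of_pow_eq_one h2p2
      have hdp : ¬ orderOf (2 : ZMod ℓ) ∣ p := by
        intro h
        have h' := orderOf_dvd_iff_pow_eq_one.mp h
        rw [hq2] at h'
        exact hneg1 h'
      have hdd2 : ¬ orderOf (2 : ZMod ℓ) ∣ 2 := by
        intro h
        have h' := orderOf_dvd_iff_pow_eq_one.mp h
        have h4 : (4 : ZMod ℓ) = 2^2 := by norm_num
        exact h41 (by rw [h4, h'])
      have hdeq : orderOf (2 : ZMod ℓ) = 2*p := by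
        by_cases hpd : p ∣ orderOf (2 : ZMod ℓ)
        · obtain ⟨k, hk⟩ := hpd
          have hk2 : k ∣ 2 := by
            have hmul : p * k ∣ p * 2 := by
              rw [← hk, mul_comm p 2]; exact hd2p
            exact (Nat.mul_dvd_mul_iff_left (by omega : 0 < p)).mp hmul
          rcases (Nat.dvd_prime Nat.prime_two).mp hk2 with h1 | h2
          · exfalso; apply hdp; rw [hk, h1, mul_one]
          · rw [hk, h2, mul_comm]
        · exfalso
          have hco : Nat.Coprime (orderOf (2 : ZMod ℓ)) p :=
            Nat.coprime_comm.mp ((pp.coprime_iff_not_dvd).mpr hpd)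
          exact hdd2 (hco.dvd_of_dvd_mul_right hd2p)
      have hℓbig : 2*p ≤ ℓ - 1 := by
        have h1 : (2 : ZMod ℓ) ^ (ℓ - 1) = 1 := ZMod.pow_card_sub_one_eq_one h20
        have h2' := orderOf_dvd_of_pow_eq_one h1
        rw [hdeq] at h2'
        exact Nat.le_of_dvd (by omega) h2'
      omega
end
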